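/- arXiv:2112.08805 — 11 statements merged into one kernel-verified Lean document; each statement's English description precedes it below -/
import Mathlib

section
/- Let G be a connected graph with edge-connectivity at least 3, let u be a vertex of maximum eccentricity d, and let n_i denote the number of vertices at distance i from u. If n_i = 2 for some i ≤ d-1, then n_{i+1} ≥ 2. -/
/-- `G` contains no cycle of length 4 as a (not necessarily induced) subgraph. -/
def C4Free {V : Type*} (G : SimpleGraph V) : Prop :=
  ¬ ∃ a b c d : V, a ≠ b ∧ a ≠ c ∧ a ≠ d ∧ b ≠ c ∧ b ≠ d ∧ c ≠ d ∧
    G.Adj a b ∧ G.Adj b c ∧ G.Adj c d ∧ G.Adj d a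

/-- `G` has edge-connectivity at least `k`: it stays connected after
deleting any set of fewer than `k` edges. -/
def EdgeConnAtLeast {V : Type*} (G : SimpleGraph V) (k : ℕ) : Prop :=
  ∀ s : Finset (Sym2 V), s.card < k → (G.deleteEdges ↑s).Connected

private lemma step_down {V : Type*} {G : SimpleGraph V} (hconn : G.Connected)
    {u v : V} {m : ℕ} (h : G.dist u v = m + 1) : ∃ y, G.dist u y = m := by
  have hr : G.Reachable u v := hconn u v
  obtain ⟨p, hp⟩ := hr.exists_walk_length_eq_dist
  have hnn : ¬ p.reverse.Nil := by
    rw [SimpleGraph.Walk.nil_iff_length_eq, SimpleGraph.Walk.length_reverse, hp, h]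
    omega
  obtain ⟨y, hadj, q, hq⟩ := SimpleGraph.Walk.not_nil_iff.mp hnn
  have hqlen : q.length = m := by
    have := congrArg SimpleGraph.Walk.length hq
    rw [SimpleGraph.Walk.length_reverse, hp, h, SimpleGraph.Walk.length_cons] at this
    omega
  refine ⟨y, ?_⟩
  have h1 : G.dist u y ≤ m := by
    rw [SimpleGraph.dist_comm]
    have := G.dist_le q
    omega
  have h2 : G.dist u v ≤ G.dist u y + G.dist y v :=
    hconn.dist_triangle
  have h3 : G.dist y v = 1 := SimpleGraph.dist_eq_one_iff_adj.mpr hadj.symm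
  omega

private lemma exists_vertex_at_dist_lvl {V : Type*} {G : SimpleGraph V} (hconn : G.Connected)
    (u : V) : ∀ m, ∀ v : V, G.dist u v = m → ∀ j ≤ m, ∃ x, G.dist u x = j := by
  intro m
  induction m with
  | zero => intro v hv j hj; exact ⟨v, by omega⟩
  | succ m ih =>
    intro v hv j hj
    rcases Nat.lt_or_ge j (m + 1) with hlt | hge
    · obtain ⟨y, hy⟩ := step_down hconn hv
      exact ih y hy j (by omega)
    · exact ⟨v, by omega⟩

theorem level_two_implies_next_two {V : Type*} [Fintype V] (G : SimpleGraph V)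
    (hconn : G.Connected) (hec : EdgeConnAtLeast G 3)
    (u : V) (d : ℕ)
    (hdiam : ∀ v w : V, G.dist v w ≤ d) (hecc : ∃ v, G.dist u v = d)
    (n : ℕ → ℕ) (hn : ∀ i, n i = {v : V | G.dist u v = i}.ncard)
    (i : ℕ) (hi : i + 1 ≤ d) (h2 : n i = 2) :
    2 ≤ n (i + 1) := by
  classical
  rw [hn] at h2 ⊢
  by_contra hlt
  push_neg at hlt
  -- the next level is nonempty
  obtain ⟨v, hv⟩ := hecc
  obtain ⟨w, hw⟩ := exists_vertex_at_dist_lvl hconn u d v hv (i + 1) hi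
  have hne : {x : V | G.dist u x = i + 1}.Nonempty := ⟨w, hw⟩
  have hfin : {x : V | G.dist u x = i + 1}.Finite := Set.toFinite _
  have hone : {x : V | G.dist u x = i + 1}.ncard = 1 := by
    have := (Set.ncard_pos hfin).mpr hne
    omega
  obtain ⟨w', hSw⟩ := Set.ncard_eq_one.mp hone
  obtain ⟨a, b, hab, hSi⟩ := Set.ncard_eq_two.mp h2
  -- delete the at most two edges from level i to w'
  set s : Finset (Sym2 V) := {s(a, w'), s(b, w')} with hs
  have hcard : s.card < 3 := by
    have : s.card ≤ 2 := (Finset.card_insert_le _ _).trans (by simp)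
    omega
  have hG' := hec s hcard
  have hkey : ∀ x y, (G.deleteEdges ↑s).Walk x y → G.dist u y ≤ i → G.dist u x ≤ i := by
    intro x y p
    induction p with
    | nil => exact fun h => h
    | @cons x y z hadj q ih =>
      intro hz
      have hy1' : G.dist u y ≤ i := ih hz
      have hGxy : G.Adj x y ∧ ¬ s(x, y) ∈ (↑s : Set (Sym2 V)) :=
        SimpleGraph.deleteEdges_adj.mp hadj
      have hdyx : G.dist y x = 1 := SimpleGraph.dist_eq_one_iff_adj.mpr hGxy.1.symm
      have htri : G.dist u x ≤ G.dist u y + G.dist y x := hconn.dist_triangle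
      have htri2 : G.dist u y ≤ G.dist u x + G.dist x y := hconn.dist_triangle
      have hdxy : G.dist x y = 1 := SimpleGraph.dist_eq_one_iff_adj.mpr hGxy.1
      by_contra hgt
      push_neg at hgt
      have hx1 : G.dist u x = i + 1 := by omega
      have hy1 : G.dist u y = i := by omega
      have hxw : x = w' := by
        have : x ∈ {z : V | G.dist u z = i + 1} := hx1
        rwa [hSw, Set.mem_singleton_iff] at this
      have hyab : y = a ∨ y = b := by
        have : y ∈ {z : V | G.dist u z = i} := hy1
        rw [hSi] at this
        exact this
      apply hGxy.2
      rcases hyab with rfl | rfl <;> subst hxw <;>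
        simp [hs, Sym2.eq_swap]
  obtain ⟨p⟩ := hG'.preconnected w' u
  have := hkey w' u p (by simp [SimpleGraph.dist_self])
  have hw'dist : G.dist u w' = i + 1 := by
    have : w' ∈ {z : V | G.dist u z = i + 1} := by rw [hSw]; simp
    exact this
  omega
end

section
/- Let G be a connected C4-free graph with edge-connectivity at least 3, let u be a vertex of maximum eccentricity d, and let n_i denote the number of vertices at distance i from u. If n_i = 1 and n_{i+1} = 3 for some i ≤ d-1, then i ≤ d-2 and n_{i+2} ≥ 4. -/
open SimpleGraph

lemma lem_back {V : Type*} (G : SimpleGraph V) (hconn : G.Connected)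
    (u v : V) (k : ℕ) (h : G.dist u v = k + 1) :
    ∃ w, G.Adj w v ∧ G.dist u w = k := by
  obtain ⟨p, hp⟩ := hconn.exists_walk_length_eq_dist v u
  rw [SimpleGraph.dist_comm, h] at hp
  cases p with
  | nil => simp at hp
  | cons hadj q =>
    rename_i w
    refine ⟨w, hadj.symm, ?_⟩
    simp [SimpleGraph.Walk.length_cons] at hp
    have h1 : G.dist u w ≤ k := by
      rw [SimpleGraph.dist_comm]
      calc G.dist w u ≤ q.length := SimpleGraph.dist_le q
        _ = k := hp
    have h2 : G.dist u v ≤ G.dist u w + 1 := by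
      have := hconn.dist_triangle (u := u) (v := w) (w := v)
      have hwv : G.dist w v ≤ 1 := by
        have := SimpleGraph.dist_le (SimpleGraph.Walk.cons hadj.symm SimpleGraph.Walk.nil)
        simpa using this
      omega
    omega

lemma lem_deg {V : Type*} [Fintype V] [DecidableEq V] (G : SimpleGraph V)
    (hec : EdgeConnAtLeast G 3) (v w0 : V) (hw0 : w0 ≠ v) :
    3 ≤ (G.neighborSet v).ncard := by
  by_contra hlt
  push_neg at hlt
  set s : Finset (Sym2 V) :=
    (G.neighborSet v).toFinite.toFinset.image (fun w => s(v, w)) with hs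
  have hcard : s.card < 3 := by
    calc s.card ≤ (G.neighborSet v).toFinite.toFinset.card := Finset.card_image_le
      _ = (G.neighborSet v).ncard := by
          rw [Set.ncard_eq_toFinset_card _ (G.neighborSet v).toFinite]
      _ < 3 := hlt
  have hcon := hec s hcard
  obtain ⟨p⟩ := hcon.preconnected v w0
  cases p with
  | nil => exact hw0 rfl
  | cons hadj q =>
    rename_i w
    rw [SimpleGraph.deleteEdges_adj] at hadj
    have hmem : s(v, w) ∈ s :=
      Finset.mem_image.mpr ⟨w, by simpa using hadj.1, rfl⟩
    exact hadj.2 (by exact_mod_cast hmem)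

lemma lem_noc {V : Type*} {G : SimpleGraph V} (hC4 : C4Free G)
    (x p q w : V) (hpq : p ≠ q) (hwx : w ≠ x)
    (h1 : G.Adj x p) (h2 : G.Adj x q) (h3 : G.Adj w p) (h4 : G.Adj w q) : False := by
  exact hC4 ⟨x, p, w, q, h1.ne, hwx.symm, h2.ne, h3.ne', hpq, h4.ne'.symm, h1, h3.symm, h4, h2.symm⟩

theorem levels_one_three {V : Type*} [Fintype V] (G : SimpleGraph V)
    (hconn : G.Connected) (hC4 : C4Free G) (hec : EdgeConnAtLeast G 3)
    (u : V) (d : ℕ)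
    (hdiam : ∀ v w : V, G.dist v w ≤ d) (hecc : ∃ v, G.dist u v = d)
    (n : ℕ → ℕ) (hn : ∀ i, n i = {v : V | G.dist u v = i}.ncard)
    (i : ℕ) (hi : i + 1 ≤ d) (h1 : n i = 1) (h3 : n (i + 1) = 3) :
    i + 2 ≤ d ∧ 4 ≤ n (i + 2) := by
  classical
  have h1' : {v : V | G.dist u v = i}.ncard = 1 := by rw [← hn]; exact h1
  obtain ⟨x, hx⟩ := Set.ncard_eq_one.mp h1'
  have h3' : {v : V | G.dist u v = i + 1}.ncard = 3 := by rw [← hn]; exact h3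
  obtain ⟨a, b, c, hab, hac, hbc, habc⟩ := Set.ncard_eq_three.mp h3'
  have hxd : G.dist u x = i := by
    have : x ∈ {v : V | G.dist u v = i} := by rw [hx]; rfl
    exact this
  have hlevel0 : ∀ v, G.dist u v = i → v = x := by
    intro v hv
    have : v ∈ {v : V | G.dist u v = i} := hv
    rwa [hx] at this
  have hlevel1 : ∀ v, G.dist u v = i + 1 → v = a ∨ v = b ∨ v = c := by
    intro v hv
    have : v ∈ {v : V | G.dist u v = i + 1} := hv
    rw [habc] at this
    simpa using this
  have had : G.dist u a = i + 1 := by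
    have : a ∈ {v : V | G.dist u v = i + 1} := by rw [habc]; simp
    exact this
  have hbd : G.dist u b = i + 1 := by
    have : b ∈ {v : V | G.dist u v = i + 1} := by rw [habc]; simp
    exact this
  have hcd : G.dist u c = i + 1 := by
    have : c ∈ {v : V | G.dist u v = i + 1} := by rw [habc]; simp
    exact this
  have hadjx : ∀ t, G.dist u t = i + 1 → G.Adj x t := by
    intro t ht
    obtain ⟨w, hw, hwd⟩ := lem_back G hconn u t i ht
    rw [hlevel0 w hwd] at hw
    exact hw
  have hxa := hadjx a had
  have hxb := hadjx b hbd
  have hxc := hadjx c hcd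
  have hxne : ∀ t, G.dist u t = i + 1 → x ≠ t := by
    intro t ht h
    rw [← h] at ht
    omega
  set S : V → Set V := fun t => {w | G.Adj t w ∧ G.dist u w = i + 2} with hS
  -- neighbor trichotomy
  have hnbr : ∀ t w, G.dist u t = i + 1 → G.Adj t w →
      w = x ∨ (w = a ∨ w = b ∨ w = c) ∨ w ∈ S t := by
    intro t w ht hw
    have htw : G.dist t w = 1 := SimpleGraph.dist_eq_one_iff_adj.mpr hw
    have hwt : G.dist w t = 1 := SimpleGraph.dist_eq_one_iff_adj.mpr hw.symm
    have hup : G.dist u w ≤ i + 2 := by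
      have := hconn.dist_triangle (u := u) (v := t) (w := w)
      omega
    have hlow : i + 1 ≤ G.dist u w + 1 := by
      have := hconn.dist_triangle (u := u) (v := w) (w := t)
      omega
    have : G.dist u w = i ∨ G.dist u w = i + 1 ∨ G.dist u w = i + 2 := by omega
    rcases this with h | h | h
    · exact Or.inl (hlevel0 w h)
    · exact Or.inr (Or.inl (hlevel1 w h))
    · exact Or.inr (Or.inr ⟨hw, h⟩)
  -- key bound
  have key : ∀ (t : V) (e : Set V), G.dist u t = i + 1 →
      (∀ w, G.Adj t w → (w = a ∨ w = b ∨ w = c) → w ∈ e) →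
      3 ≤ 1 + e.ncard + (S t).ncard := by
    intro t e ht hmem
    have hdeg := lem_deg G hec t x (hxne t ht)
    have hsub : G.neighborSet t ⊆ insert x (e ∪ S t) := by
      intro w hw
      rcases hnbr t w ht hw with h | h | h
      · exact Or.inl h
      · exact Or.inr (Or.inl (hmem w hw h))
      · exact Or.inr (Or.inr h)
    calc 3 ≤ (G.neighborSet t).ncard := hdeg
      _ ≤ (insert x (e ∪ S t)).ncard := Set.ncard_le_ncard hsub (Set.toFinite _)
      _ ≤ (e ∪ S t).ncard + 1 := Set.ncard_insert_le _ _
      _ ≤ (e.ncard + (S t).ncard) + 1 := by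
          have := Set.ncard_union_le e (S t)
          omega
      _ = 1 + e.ncard + (S t).ncard := by ring
  -- at most one edge among a, b, c
  have noPair : ∀ p q r : V, p ≠ q → G.dist u r = i + 1 → G.Adj x p → G.Adj x q →
      G.Adj r p → G.Adj r q → False := by
    intro p q r hpq hr h1 h2 h3 h4
    exact lem_noc hC4 x p q r hpq (Ne.symm (hxne r hr)) h1 h2 h3 h4
  -- disjointness
  have hdisj : ∀ p q : V, p ≠ q → G.Adj x p → G.Adj x q → Disjoint (S p) (S q) := by
    intro p q hpq h1 h2
    rw [Set.disjoint_left]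
    rintro w ⟨hw1, hw2⟩ ⟨hw3, _⟩
    have hwx : w ≠ x := by
      intro h
      rw [h, hxd] at hw2
      omega
    exact lem_noc hC4 x p q w hpq hwx h1 h2 hw1.symm hw3.symm
  -- sum bound
  have hsum : 4 ≤ (S a).ncard + (S b).ncard + (S c).ncard := by
    have b2 : ∀ t, G.dist u t = i + 1 →
        (∀ w, G.Adj t w → (w = a ∨ w = b ∨ w = c) → False) → 2 ≤ (S t).ncard := by
      intro t ht h
      have := key t ∅ ht (fun w hw hm => absurd (h w hw hm) not_false)
      simp [Set.ncard_empty] at this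
      omega
    have b1 : ∀ t s, G.dist u t = i + 1 →
        (∀ w, G.Adj t w → (w = a ∨ w = b ∨ w = c) → w = s) → 1 ≤ (S t).ncard := by
      intro t s ht h
      have := key t {s} ht (fun w hw hm => h w hw hm)
      simp [Set.ncard_singleton] at this
      omega
    by_cases Hab : G.Adj a b
    · have Hac : ¬ G.Adj a c := fun h => noPair b c a hbc had hxb hxc Hab h
      have Hbc : ¬ G.Adj b c := fun h => noPair a c b hac hbd hxa hxc Hab.symm h
      have ha1 : 1 ≤ (S a).ncard := by
        refine b1 a b had ?_
        rintro w hw (rfl | rfl | rfl)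
        · exact absurd hw (G.irrefl)
        · rfl
        · exact absurd hw Hac
      have hb1 : 1 ≤ (S b).ncard := by
        refine b1 b a hbd ?_
        rintro w hw (rfl | rfl | rfl)
        · rfl
        · exact absurd hw (G.irrefl)
        · exact absurd hw Hbc
      have hc2 : 2 ≤ (S c).ncard := by
        refine b2 c hcd ?_
        rintro w hw (rfl | rfl | rfl)
        · exact Hac hw.symm
        · exact Hbc hw.symm
        · exact G.irrefl hw
      omega
    · by_cases Hac : G.Adj a c
      · have Hbc : ¬ G.Adj b c := fun h => noPair a b c hab hcd hxa hxb Hac.symm h.symm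
        have ha1 : 1 ≤ (S a).ncard := by
          refine b1 a c had ?_
          rintro w hw (rfl | rfl | rfl)
          · exact absurd hw (G.irrefl)
          · exact absurd hw Hab
          · rfl
        have hc1 : 1 ≤ (S c).ncard := by
          refine b1 c a hcd ?_
          rintro w hw (rfl | rfl | rfl)
          · rfl
          · exact absurd hw.symm Hbc
          · exact absurd hw (G.irrefl)
        have hb2 : 2 ≤ (S b).ncard := by
          refine b2 b hbd ?_
          rintro w hw (rfl | rfl | rfl)
          · exact Hab hw.symm
          · exact G.irrefl hw
          · exact Hbc hw
        omega
      · by_cases Hbc : G.Adj b c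
        · have hb1 : 1 ≤ (S b).ncard := by
            refine b1 b c hbd ?_
            rintro w hw (rfl | rfl | rfl)
            · exact absurd hw.symm Hab
            · exact absurd hw (G.irrefl)
            · rfl
          have hc1 : 1 ≤ (S c).ncard := by
            refine b1 c b hcd ?_
            rintro w hw (rfl | rfl | rfl)
            · exact absurd hw.symm Hac
            · rfl
            · exact absurd hw (G.irrefl)
          have ha2 : 2 ≤ (S a).ncard := by
            refine b2 a had ?_
            rintro w hw (rfl | rfl | rfl)
            · exact G.irrefl hw
            · exact Hab hw
            · exact Hac hw
          omega
        · have ha2 : 2 ≤ (S a).ncard := by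
            refine b2 a had ?_
            rintro w hw (rfl | rfl | rfl)
            · exact G.irrefl hw
            · exact Hab hw
            · exact Hac hw
          have hb2 : 2 ≤ (S b).ncard := by
            refine b2 b hbd ?_
            rintro w hw (rfl | rfl | rfl)
            · exact Hab hw.symm
            · exact G.irrefl hw
            · exact Hbc hw
          omega
  -- union bound
  have hucard : (S a ∪ (S b ∪ S c)).ncard
      = (S a).ncard + ((S b).ncard + (S c).ncard) := by
    rw [Set.ncard_union_eq ?_ (Set.toFinite _) (Set.toFinite _),
      Set.ncard_union_eq (hdisj b c hbc hxb hxc) (Set.toFinite _) (Set.toFinite _)]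
    exact Set.disjoint_union_right.mpr ⟨hdisj a b hab hxa hxb, hdisj a c hac hxa hxc⟩
  have husub : S a ∪ (S b ∪ S c) ⊆ {v : V | G.dist u v = i + 2} := by
    rintro w (⟨_, h⟩ | ⟨_, h⟩ | ⟨_, h⟩) <;> exact h
  have hfinal : 4 ≤ n (i + 2) := by
    rw [hn]
    calc 4 ≤ (S a).ncard + (S b).ncard + (S c).ncard := hsum
      _ = (S a ∪ (S b ∪ S c)).ncard := by rw [hucard]; ring
      _ ≤ {v : V | G.dist u v = i + 2}.ncard :=
          Set.ncard_le_ncard husub (Set.toFinite _)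
  refine ⟨?_, hfinal⟩
  have hne : {v : V | G.dist u v = i + 2}.Nonempty := by
    apply Set.nonempty_of_ncard_ne_zero
    rw [← hn]
    omega
  obtain ⟨v, hv⟩ := hne
  have := hdiam u v
  simp only [Set.mem_setOf_eq] at hv
  omega
end

section
/- Let G be a connected C4-free graph with edge-connectivity at least 3, let u be a vertex of maximum eccentricity d, and let n_i denote the number of vertices at distance i from u. If n_i = 2 and n_{i+1} = 2 for some i ≤ d-1, then i ≤ d-2 and n_{i+2} ≥ 3. -/
open Classical in
noncomputable def cutE {V : Type*} [Fintype V] (G : SimpleGraph V) (S : Set V) :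
    Finset (Sym2 V) :=
  Finset.univ.filter (fun e => ∃ a b, e = s(a, b) ∧ G.Adj a b ∧ a ∈ S ∧ b ∉ S)

lemma mem_cutE {V : Type*} [Fintype V] {G : SimpleGraph V} {S : Set V} {e : Sym2 V} :
    e ∈ cutE G S ↔ ∃ a b, e = s(a, b) ∧ G.Adj a b ∧ a ∈ S ∧ b ∉ S := by
  classical
  simp [cutE]

lemma walk_stays {V : Type*} {G : SimpleGraph V} {S : Set V} {s : Set (Sym2 V)}
    (hs : ∀ a b, G.Adj a b → a ∈ S → b ∉ S → s(a, b) ∈ s) :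
    ∀ {a b : V}, (G.deleteEdges s).Walk a b → a ∈ S → b ∈ S := by
  intro a b p
  induction p with
  | nil => exact id
  | cons h _ ih =>
    intro ha
    refine ih ?_
    rw [SimpleGraph.deleteEdges_adj] at h
    by_contra hb
    exact h.2 (hs _ _ h.1 ha hb)

lemma cut_ge {V : Type*} [Fintype V] {G : SimpleGraph V} (hec : EdgeConnAtLeast G 3)
    {S : Set V} {v w : V} (hv : v ∈ S) (hw : w ∉ S) : 3 ≤ (cutE G S).card := by
  by_contra h
  push_neg at h
  obtain ⟨p⟩ := (hec (cutE G S) h).preconnected v w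
  exact hw (walk_stays (fun a b hab ha hb =>
    Finset.mem_coe.mpr (mem_cutE.mpr ⟨a, b, rfl, hab, ha, hb⟩)) p hv)

lemma card_pair_contra {V : Type*} [Fintype V] {G : SimpleGraph V} {S : Set V}
    (h3 : 3 ≤ (cutE G S).card) (e1 e2 : Sym2 V)
    (hsub : ∀ e ∈ cutE G S, e = e1 ∨ e = e2) : False := by
  classical
  have h1 : cutE G S ⊆ {e1, e2} := by
    intro e he
    rcases hsub e he with rfl | rfl <;> simp
  have h2 := Finset.card_le_card h1
  have h4 : ({e1, e2} : Finset (Sym2 V)).card ≤ 2 :=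
    (Finset.card_insert_le _ _).trans (by simp)
  omega

/-- A vertex `Z` with all its neighbors among `{p, q}` contradicts edge-connectivity 3,
as long as there is another vertex. -/
lemma no_small_deg {V : Type*} [Fintype V] {G : SimpleGraph V} (hec : EdgeConnAtLeast G 3)
    {Z p q z' : V} (hz' : z' ≠ Z) (hnb : ∀ a, G.Adj a Z → a = p ∨ a = q) : False := by
  have h3 := cut_ge hec (S := {v | v ≠ Z}) (v := z') (w := Z) hz' (by simp)
  refine card_pair_contra h3 s(p, Z) s(q, Z) ?_
  intro e he
  obtain ⟨a, b, rfl, hab, ha, hb⟩ := mem_cutE.mp he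
  simp only [Set.mem_setOf_eq, not_not] at ha hb
  subst hb
  rcases hnb a hab with rfl | rfl
  · left; rfl
  · right; rfl

lemma cut_level {V : Type*} [Fintype V] {G : SimpleGraph V} (hconn : G.Connected) {u : V}
    {j : ℕ} {e : Sym2 V} (he : e ∈ cutE G {v | G.dist u v ≤ j}) :
    ∃ a b, e = s(a, b) ∧ G.Adj a b ∧ G.dist u a = j ∧ G.dist u b = j + 1 := by
  obtain ⟨a, b, rfl, hab, ha, hb⟩ := mem_cutE.mp he
  simp only [Set.mem_setOf_eq, not_le] at ha hb
  have h1 : G.dist a b ≤ 1 := by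
    have := SimpleGraph.dist_le hab.toWalk
    simpa using this
  have h2 := hconn.dist_triangle (u := u) (v := a) (w := b)
  exact ⟨a, b, rfl, hab, by omega, by omega⟩

/-- In a graph with edge-connectivity ≥ 3, if two consecutive distance levels from `u`
are `{A, B}` and `{X, Y}`, then some vertex of the lower level is adjacent to both upper
vertices, and some vertex of the upper level is adjacent to both lower vertices. -/
lemma exists_both {V : Type*} [Fintype V] {G : SimpleGraph V} (hconn : G.Connected)
    (hec : EdgeConnAtLeast G 3) {u A B X Y : V} {j : ℕ}
    (hLj : {v | G.dist u v = j} = {A, B})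
    (hLj1 : {v | G.dist u v = (j + 1)} = {X, Y}) :
    (∃ c, G.dist u c = j ∧ G.Adj c X ∧ G.Adj c Y) ∧
    (∃ r, G.dist u r = j + 1 ∧ G.Adj A r ∧ G.Adj B r) := by
  have hdA : G.dist u A = j := by
    have : A ∈ {v | G.dist u v = j} := by rw [hLj]; simp
    exact this
  have hdB : G.dist u B = j := by
    have : B ∈ {v | G.dist u v = j} := by rw [hLj]; simp
    exact this
  have hdX : G.dist u X = j + 1 := by
    have : X ∈ {v | G.dist u v = (j + 1)} := by rw [hLj1]; simp
    exact this
  have h3 : 3 ≤ (cutE G {v | G.dist u v ≤ j}).card :=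
    cut_ge hec (v := u) (w := X) (by simp [SimpleGraph.dist_self])
      (by simp [hdX])
  have hmem : ∀ e ∈ cutE G {v | G.dist u v ≤ j},
      (G.Adj A X ∧ e = s(A, X)) ∨ (G.Adj A Y ∧ e = s(A, Y)) ∨
      (G.Adj B X ∧ e = s(B, X)) ∨ (G.Adj B Y ∧ e = s(B, Y)) := by
    intro e he
    obtain ⟨a, b, rfl, hab, ha, hb⟩ := cut_level hconn he
    have ha' : a = A ∨ a = B := by
      have : a ∈ {v | G.dist u v = j} := ha
      rw [hLj] at this
      simpa using this
    have hb' : b = X ∨ b = Y := by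
      have : b ∈ {v | G.dist u v = (j + 1)} := hb
      rw [hLj1] at this
      simpa using this
    rcases ha' with rfl | rfl <;> rcases hb' with rfl | rfl <;> tauto
  constructor
  · by_contra hc
    push_neg at hc
    have hnA : ¬(G.Adj A X ∧ G.Adj A Y) := fun ⟨u1, u2⟩ => hc A hdA u1 u2
    have hnB : ¬(G.Adj B X ∧ G.Adj B Y) := fun ⟨u1, u2⟩ => hc B hdB u1 u2
    rcases not_and_or.mp hnA with h | h <;> rcases not_and_or.mp hnB with h' | h'
    · exact card_pair_contra h3 s(A, Y) s(B, Y)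
        (fun e he => by rcases hmem e he with ⟨h1, rfl⟩ | ⟨h1, rfl⟩ | ⟨h1, rfl⟩ | ⟨h1, rfl⟩ <;> tauto)
    · exact card_pair_contra h3 s(A, Y) s(B, X)
        (fun e he => by rcases hmem e he with ⟨h1, rfl⟩ | ⟨h1, rfl⟩ | ⟨h1, rfl⟩ | ⟨h1, rfl⟩ <;> tauto)
    · exact card_pair_contra h3 s(A, X) s(B, Y)
        (fun e he => by rcases hmem e he with ⟨h1, rfl⟩ | ⟨h1, rfl⟩ | ⟨h1, rfl⟩ | ⟨h1, rfl⟩ <;> tauto)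
    · exact card_pair_contra h3 s(A, X) s(B, X)
        (fun e he => by rcases hmem e he with ⟨h1, rfl⟩ | ⟨h1, rfl⟩ | ⟨h1, rfl⟩ | ⟨h1, rfl⟩ <;> tauto)
  · by_contra hc
    push_neg at hc
    have hdY : G.dist u Y = j + 1 := by
      have : Y ∈ {v | G.dist u v = (j + 1)} := by rw [hLj1]; simp
      exact this
    have hnX : ¬(G.Adj A X ∧ G.Adj B X) := fun ⟨u1, u2⟩ => hc X hdX u1 u2
    have hnY : ¬(G.Adj A Y ∧ G.Adj B Y) := fun ⟨u1, u2⟩ => hc Y hdY u1 u2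
    rcases not_and_or.mp hnX with h | h <;> rcases not_and_or.mp hnY with h' | h'
    · exact card_pair_contra h3 s(B, X) s(B, Y)
        (fun e he => by rcases hmem e he with ⟨h1, rfl⟩ | ⟨h1, rfl⟩ | ⟨h1, rfl⟩ | ⟨h1, rfl⟩ <;> tauto)
    · exact card_pair_contra h3 s(B, X) s(A, Y)
        (fun e he => by rcases hmem e he with ⟨h1, rfl⟩ | ⟨h1, rfl⟩ | ⟨h1, rfl⟩ | ⟨h1, rfl⟩ <;> tauto)
    · exact card_pair_contra h3 s(A, X) s(B, Y)
        (fun e he => by rcases hmem e he with ⟨h1, rfl⟩ | ⟨h1, rfl⟩ | ⟨h1, rfl⟩ | ⟨h1, rfl⟩ <;> tauto)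
    · exact card_pair_contra h3 s(A, X) s(A, Y)
        (fun e he => by rcases hmem e he with ⟨h1, rfl⟩ | ⟨h1, rfl⟩ | ⟨h1, rfl⟩ | ⟨h1, rfl⟩ <;> tauto)

/-- If level `j` is `{c, b'}` with `c` adjacent to both vertices `X, Y` of level `j+1`,
then level `j+2` is nonempty. -/
lemma next_nonempty' {V : Type*} [Fintype V] {G : SimpleGraph V} (hconn : G.Connected)
    (hC4 : C4Free G) (hec : EdgeConnAtLeast G 3) {u c b' X Y : V} {j : ℕ}
    (hXY : X ≠ Y) (hcb : c ≠ b')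
    (hLj : {v | G.dist u v = j} = {c, b'})
    (hLj1 : {v | G.dist u v = (j + 1)} = {X, Y})
    (hcX : G.Adj c X) (hcY : G.Adj c Y) :
    ∃ w, G.dist u w = j + 2 := by
  by_contra hne
  push_neg at hne
  have hdc : G.dist u c = j := by
    have : c ∈ {v | G.dist u v = j} := by rw [hLj]; simp
    exact this
  have hdb : G.dist u b' = j := by
    have : b' ∈ {v | G.dist u v = j} := by rw [hLj]; simp
    exact this
  have hdX : G.dist u X = j + 1 := by
    have : X ∈ {v | G.dist u v = (j + 1)} := by rw [hLj1]; simp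
    exact this
  have hdY : G.dist u Y = j + 1 := by
    have : Y ∈ {v | G.dist u v = (j + 1)} := by rw [hLj1]; simp
    exact this
  have hb'not : ¬(G.Adj b' X ∧ G.Adj b' Y) := by
    rintro ⟨h1, h2⟩
    exact hC4 ⟨c, X, b', Y, fun h => by rw [h] at hdc; omega, hcb,
      fun h => by rw [h] at hdc; omega, fun h => by rw [h] at hdX; omega, hXY,
      fun h => by rw [h] at hdb; omega, hcX, h1.symm, h2, hcY.symm⟩
  -- neighbors of a level-(j+1) vertex have distance j, j+1 (no level j+2)
  have hnbr : ∀ Z a, G.dist u Z = j + 1 → G.Adj a Z → G.dist u a = j ∨ G.dist u a = j + 1 := by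
    intro Z a hZ haZ
    have h1 : G.dist a Z ≤ 1 := by
      have := SimpleGraph.dist_le haZ.toWalk
      simpa using this
    have h2 := hconn.dist_triangle (u := u) (v := a) (w := Z)
    have h3 := hconn.dist_triangle (u := u) (v := Z) (w := a)
    have h4 : G.dist Z a ≤ 1 := by
      have := SimpleGraph.dist_le haZ.symm.toWalk
      simpa using this
    have h5 := hne a
    omega
  rcases not_and_or.mp hb'not with h | h
  · -- X's neighbors are among {c, Y}
    refine no_small_deg hec (Z := X) (p := c) (q := Y) (z' := c)
      (fun hh => by rw [hh] at hdc; omega) ?_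
    intro a haX
    rcases hnbr X a hdX haX with h1 | h1
    · left
      have : a ∈ {v | G.dist u v = j} := h1
      rw [hLj] at this
      rcases this with rfl | rfl
      · rfl
      · exact absurd haX h
    · right
      have : a ∈ {v | G.dist u v = (j + 1)} := h1
      rw [hLj1] at this
      rcases this with rfl | rfl
      · exact absurd rfl (G.ne_of_adj haX)
      · rfl
  · -- Y's neighbors are among {c, X}
    refine no_small_deg hec (Z := Y) (p := c) (q := X) (z' := c)
      (fun hh => by rw [hh] at hdc; omega) ?_
    intro a haY
    rcases hnbr Y a hdY haY with h1 | h1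
    · left
      have : a ∈ {v | G.dist u v = j} := h1
      rw [hLj] at this
      rcases this with rfl | rfl
      · rfl
      · exact absurd haY h
    · right
      have : a ∈ {v | G.dist u v = (j + 1)} := h1
      rw [hLj1] at this
      rcases this with rfl | rfl
      · rfl
      · exact absurd rfl (G.ne_of_adj haY)

theorem levels_two_two {V : Type*} [Fintype V] (G : SimpleGraph V)
    (hconn : G.Connected) (hC4 : C4Free G) (hec : EdgeConnAtLeast G 3)
    (u : V) (d : ℕ)
    (hdiam : ∀ v w : V, G.dist v w ≤ d) (hecc : ∃ v, G.dist u v = d)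
    (n : ℕ → ℕ) (hn : ∀ i, n i = {v : V | G.dist u v = i}.ncard)
    (i : ℕ) (hi : i + 1 ≤ d) (h1 : n i = 2) (h2 : n (i + 1) = 2) :
    i + 2 ≤ d ∧ 3 ≤ n (i + 2) := by
  rw [hn] at h1 h2
  obtain ⟨A, B, hAB, hLi⟩ := Set.ncard_eq_two.mp h1
  obtain ⟨X, Y, hXY, hLi1⟩ := Set.ncard_eq_two.mp h2
  obtain ⟨⟨c, hdc, hcX, hcY⟩, -⟩ := exists_both hconn hec hLi hLi1
  have hc' : c = A ∨ c = B := by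
    have : c ∈ {v | G.dist u v = i} := hdc
    rw [hLi] at this
    simpa using this
  -- level i+2 is nonempty
  have hW : ∃ w, G.dist u w = i + 2 := by
    rcases hc' with rfl | rfl
    · exact next_nonempty' hconn hC4 hec hXY hAB hLi hLi1 hcX hcY
    · exact next_nonempty' hconn hC4 hec hXY (Ne.symm hAB) (by rw [hLi, Set.pair_comm]) hLi1 hcX hcY
  obtain ⟨w, hw⟩ := hW
  have hd2 : i + 2 ≤ d := hw ▸ hdiam u w
  refine ⟨hd2, ?_⟩
  rw [hn]
  by_contra h3
  push_neg at h3
  have hfin : {v : V | G.dist u v = i + 2}.Finite := Set.toFinite _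
  have hpos : 0 < {v : V | G.dist u v = i + 2}.ncard :=
    (Set.ncard_pos hfin).mpr ⟨w, hw⟩
  have hcase : {v : V | G.dist u v = i + 2}.ncard = 1 ∨
      {v : V | G.dist u v = i + 2}.ncard = 2 := by omega
  have hdX : G.dist u X = i + 1 := by
    have : X ∈ {v | G.dist u v = (i + 1)} := by rw [hLi1]; simp
    exact this
  have hdY : G.dist u Y = i + 1 := by
    have : Y ∈ {v | G.dist u v = (i + 1)} := by rw [hLi1]; simp
    exact this
  rcases hcase with hcase | hcase
  · obtain ⟨P, hP⟩ := Set.ncard_eq_one.mp hcase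
    have hdP : G.dist u P = i + 2 := by
      have : P ∈ {v | G.dist u v = i + 2} := by rw [hP]; simp
      exact this
    have h3c : 3 ≤ (cutE G {v | G.dist u v ≤ i + 1}).card :=
      cut_ge hec (v := u) (w := P) (by simp [SimpleGraph.dist_self]) (by simp [hdP])
    refine card_pair_contra h3c s(X, P) s(Y, P) ?_
    intro e he
    obtain ⟨a, b, rfl, hab, ha, hb⟩ := cut_level hconn he
    have ha' : a = X ∨ a = Y := by
      have : a ∈ {v | G.dist u v = (i + 1)} := ha
      rw [hLi1] at this
      simpa using this
    have hb' : b = P := by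
      have : b ∈ {v | G.dist u v = i + 2} := hb
      rw [hP] at this
      simpa using this
    subst hb'
    rcases ha' with rfl | rfl
    · left; rfl
    · right; rfl
  · obtain ⟨P, Q, hPQ, hL2⟩ := Set.ncard_eq_two.mp hcase
    obtain ⟨-, r, hdr, hXr, hYr⟩ := exists_both hconn hec (j := i + 1) hLi1 hL2
    exact hC4 ⟨c, X, r, Y, fun h => by rw [h] at hdc; omega,
      fun h => by rw [h] at hdc; omega, fun h => by rw [h] at hdc; omega,
      fun h => by rw [h] at hdX; omega, hXY, fun h => by rw [h] at hdr; omega,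
      hcX, hXr, hYr.symm, hcY.symm⟩
end

section
/- Let G be a connected C4-free graph with edge-connectivity at least 3, let u be a vertex of maximum eccentricity d, let V_i be the set of vertices at distance i from u, and n_i = |V_i|. If (n_i, n_{i+1}, n_{i+2}) = (2,3,2) for some i ≤ d-2, then the number of edges of G with both endpoints in V_{i+1} is exactly 1 or 2, and moreover i ≤ d-3. -/
lemma cn_aux {V : Type*} {G : SimpleGraph V} (hC4 : C4Free G) {x y a b : V}
    (hxy : x ≠ y) (hxa : G.Adj x a) (hya : G.Adj y a) (hxb : G.Adj x b) (hyb : G.Adj y b) :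
    a = b := by
  by_contra hab
  exact hC4 ⟨x, a, y, b, hxa.ne, hxy, hxb.ne, hya.ne', hab, hyb.ne,
    hxa, hya.symm, hyb, hxb.symm⟩

lemma adj_dist_aux {V : Type*} {G : SimpleGraph V} (hconn : G.Connected) (u : V)
    {v w : V} (h : G.Adj v w) : G.dist u w ≤ G.dist u v + 1 := by
  have h2 := hconn.dist_triangle (u := u) (v := v) (w := w)
  rwa [SimpleGraph.dist_eq_one_iff_adj.mpr h] at h2

lemma exists_pred_aux {V : Type*} {G : SimpleGraph V} (hconn : G.Connected) {u v : V}
    {k : ℕ} (h : G.dist u v = k + 1) : ∃ w, G.Adj w v ∧ G.dist u w = k := by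
  obtain ⟨p, hp⟩ := hconn.exists_walk_length_eq_dist u v
  obtain ⟨q, hq⟩ : ∃ q : G.Walk v u, q.length = k + 1 := ⟨p.reverse, by simp [hp, h]⟩
  cases q with
  | nil => simp at hq
  | @cons _ w _ hadj r =>
    rw [SimpleGraph.Walk.length_cons] at hq
    have h1 : G.dist u w ≤ k := by
      have hrk : r.length = k := by omega
      have h3 := SimpleGraph.dist_le r.reverse
      simpa [SimpleGraph.Walk.length_reverse, hrk] using h3
    have h2 : G.dist u v ≤ G.dist u w + 1 := adj_dist_aux hconn u hadj.symm
    exact ⟨w, hadj.symm, by omega⟩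

lemma min_deg_aux {V : Type*} [Fintype V] [DecidableEq V] {G : SimpleGraph V}
    [DecidableRel G.Adj] (hec : EdgeConnAtLeast G 3) {x y : V} (hxy : x ≠ y) (v : V) :
    3 ≤ G.degree v := by
  by_contra hlt
  push_neg at hlt
  have hcard : (G.incidenceFinset v).card < 3 := by
    rwa [G.card_incidenceFinset_eq_degree v]
  have hc := hec _ hcard
  obtain ⟨w, hw⟩ : ∃ w, w ≠ v := by
    rcases eq_or_ne x v with rfl | hx
    · exact ⟨y, hxy.symm⟩
    · exact ⟨x, hx⟩
  obtain ⟨p⟩ := hc.preconnected v w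
  cases p with
  | nil => exact hw rfl
  | @cons _ b _ hadj r =>
    rw [SimpleGraph.deleteEdges_adj] at hadj
    exact hadj.2 (by
      rw [Finset.mem_coe, SimpleGraph.mem_incidenceFinset]
      exact (G.mk'_mem_incidenceSet_left_iff).mpr hadj.1)

set_option maxHeartbeats 1000000 in
lemma stepD_aux {V : Type*} [Fintype V] [DecidableEq V] {G : SimpleGraph V}
    [DecidableRel G.Adj] {u : V} {i : ℕ} {a1 a2 b1 b2 b3 c1 c2 : V}
    (hc : c1 ≠ c2)
    (memA : ∀ v, G.dist u v = i ↔ (v = a1 ∨ v = a2))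
    (memB : ∀ v, G.dist u v = i + 1 ↔ (v = b1 ∨ v = b2 ∨ v = b3))
    (memC : ∀ v, G.dist u v = i + 2 ↔ (v = c1 ∨ v = c2))
    (hdeg : ∀ v, 3 ≤ (G.neighborFinset v).card)
    (hcn : ∀ {x y a b : V}, x ≠ y → G.Adj x a → G.Adj y a → G.Adj x b → G.Adj y b → a = b)
    (hlevel : ∀ {v w : V}, G.Adj v w →
      G.dist u w ≤ G.dist u v + 1 ∧ G.dist u v ≤ G.dist u w + 1)
    (hpredB : ∀ {v : V}, G.dist u v = i + 1 → ∃ a, G.Adj a v ∧ G.dist u a = i)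
    (hcap : ∀ v, G.dist u v ≤ i + 2) : False := by
  have hnel : ∀ {x y : V}, G.dist u x ≠ G.dist u y → x ≠ y := fun h he => h (by rw [he])
  have hla1 : G.dist u a1 = i := (memA a1).mpr (Or.inl rfl)
  have hla2 : G.dist u a2 = i := (memA a2).mpr (Or.inr rfl)
  have hlb1 : G.dist u b1 = i + 1 := (memB b1).mpr (Or.inl rfl)
  have hlb2 : G.dist u b2 = i + 1 := (memB b2).mpr (Or.inr (Or.inl rfl))
  have hlb3 : G.dist u b3 = i + 1 := (memB b3).mpr (Or.inr (Or.inr rfl))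
  have hlc1 : G.dist u c1 = i + 2 := (memC c1).mpr (Or.inl rfl)
  have hlc2 : G.dist u c2 = i + 2 := (memC c2).mpr (Or.inr rfl)
  have hCnbr : ∀ {c o w : V}, G.dist u c = i + 2 →
      (∀ v, G.dist u v = i + 2 → v = c ∨ v = o) → G.Adj c w →
      G.dist u w = i + 1 ∨ w = o := by
    intro c o w hcl hmem hadj
    obtain ⟨l1, l2⟩ := hlevel hadj
    rw [hcl] at l1 l2
    have hw2 := hcap w
    have hcases : G.dist u w = i + 1 ∨ G.dist u w = i + 2 := by omega
    rcases hcases with h | h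
    · exact Or.inl h
    · rcases hmem w h with h' | h'
      · exact absurd h'.symm hadj.ne
      · exact Or.inr h'
  have hsub1 : G.neighborFinset c1 ⊆ ({b1, b2, b3, c2} : Finset V) := by
    intro w hw
    rw [SimpleGraph.mem_neighborFinset] at hw
    rcases hCnbr hlc1 (fun v hv => (memC v).mp hv) hw with h | rfl
    · rcases (memB w).mp h with rfl | rfl | rfl <;> simp
    · simp
  have hsub2 : G.neighborFinset c2 ⊆ ({b1, b2, b3, c1} : Finset V) := by
    intro w hw
    rw [SimpleGraph.mem_neighborFinset] at hw
    rcases hCnbr hlc2 (fun v hv => ((memC v).mp hv).symm) hw with h | rfl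
    · rcases (memB w).mp h with rfl | rfl | rfl <;> simp
    · simp
  have hBcard3 : ({b1, b2, b3} : Finset V).card ≤ 3 := by
    have h4b := Finset.card_insert_le b1 ({b2, b3} : Finset V)
    have h4c := Finset.card_insert_le b2 ({b3} : Finset V)
    simp only [Finset.card_singleton] at h4c
    omega
  by_cases hcc : G.Adj c1 c2
  · -- c1 ~ c2
    set S1 := G.neighborFinset c1 ∩ ({b1, b2, b3} : Finset V) with hS1def
    set S2 := G.neighborFinset c2 ∩ ({b1, b2, b3} : Finset V) with hS2def
    have hS1card : 2 ≤ S1.card := by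
      have hsub : G.neighborFinset c1 ⊆ S1 ∪ {c2} := by
        intro w hw
        have h' := hsub1 hw
        simp only [Finset.mem_insert, Finset.mem_singleton] at h'
        rcases h' with h | h | h | h
        · exact Finset.mem_union_left _ (Finset.mem_inter.mpr ⟨hw, by simp [h]⟩)
        · exact Finset.mem_union_left _ (Finset.mem_inter.mpr ⟨hw, by simp [h]⟩)
        · exact Finset.mem_union_left _ (Finset.mem_inter.mpr ⟨hw, by simp [h]⟩)
        · exact Finset.mem_union_right _ (by simp [h])
      have h1 := hdeg c1
      have h2 := Finset.card_le_card hsub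
      have h3 := Finset.card_union_le S1 ({c2} : Finset V)
      simp only [Finset.card_singleton] at h3
      omega
    have hS2card : 2 ≤ S2.card := by
      have hsub : G.neighborFinset c2 ⊆ S2 ∪ {c1} := by
        intro w hw
        have h' := hsub2 hw
        simp only [Finset.mem_insert, Finset.mem_singleton] at h'
        rcases h' with h | h | h | h
        · exact Finset.mem_union_left _ (Finset.mem_inter.mpr ⟨hw, by simp [h]⟩)
        · exact Finset.mem_union_left _ (Finset.mem_inter.mpr ⟨hw, by simp [h]⟩)
        · exact Finset.mem_union_left _ (Finset.mem_inter.mpr ⟨hw, by simp [h]⟩)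
        · exact Finset.mem_union_right _ (by simp [h])
      have h1 := hdeg c2
      have h2 := Finset.card_le_card hsub
      have h3 := Finset.card_union_le S2 ({c1} : Finset V)
      simp only [Finset.card_singleton] at h3
      omega
    have hintercard : (S1 ∩ S2).card ≤ 1 := by
      by_contra h
      push_neg at h
      obtain ⟨x, hx, y, hy, hxy⟩ := Finset.one_lt_card.mp h
      have hx1 : G.Adj c1 x := (SimpleGraph.mem_neighborFinset _ _ _).mp
        (Finset.mem_inter.mp (Finset.mem_inter.mp hx).1).1
      have hx2 : G.Adj c2 x := (SimpleGraph.mem_neighborFinset _ _ _).mp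
        (Finset.mem_inter.mp (Finset.mem_inter.mp hx).2).1
      have hy1 : G.Adj c1 y := (SimpleGraph.mem_neighborFinset _ _ _).mp
        (Finset.mem_inter.mp (Finset.mem_inter.mp hy).1).1
      have hy2 : G.Adj c2 y := (SimpleGraph.mem_neighborFinset _ _ _).mp
        (Finset.mem_inter.mp (Finset.mem_inter.mp hy).2).1
      exact hxy (hcn hc hx1 hx2 hy1 hy2)
    have huc : (S1 ∪ S2).card ≤ 3 := by
      have : S1 ∪ S2 ⊆ ({b1, b2, b3} : Finset V) :=
        Finset.union_subset (Finset.inter_subset_right) (Finset.inter_subset_right)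
      have := Finset.card_le_card this
      omega
    have hcards := Finset.card_inter_add_card_union S1 S2
    obtain ⟨bx, hbx⟩ := Finset.card_eq_one.mp (show (S1 ∩ S2).card = 1 by omega)
    have hbxS1 : bx ∈ S1 := Finset.inter_subset_left (hbx ▸ Finset.mem_singleton_self bx)
    have hbxS2 : bx ∈ S2 := Finset.inter_subset_right (hbx ▸ Finset.mem_singleton_self bx)
    obtain ⟨p1, q1, hpq1, hS1e⟩ := Finset.card_eq_two.mp (show S1.card = 2 by omega)
    obtain ⟨p2, q2, hpq2, hS2e⟩ := Finset.card_eq_two.mp (show S2.card = 2 by omega)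
    obtain ⟨by', hby'ne, hS1'⟩ : ∃ y', bx ≠ y' ∧ S1 = {bx, y'} := by
      rw [hS1e] at hbxS1
      simp only [Finset.mem_insert, Finset.mem_singleton] at hbxS1
      rcases hbxS1 with rfl | rfl
      · exact ⟨q1, hpq1, hS1e⟩
      · exact ⟨p1, hpq1.symm, by rw [hS1e, Finset.pair_comm]⟩
    obtain ⟨bz, hbzne, hS2'⟩ : ∃ y', bx ≠ y' ∧ S2 = {bx, y'} := by
      rw [hS2e] at hbxS2
      simp only [Finset.mem_insert, Finset.mem_singleton] at hbxS2
      rcases hbxS2 with rfl | rfl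
      · exact ⟨q2, hpq2, hS2e⟩
      · exact ⟨p2, hpq2.symm, by rw [hS2e, Finset.pair_comm]⟩
    have hbyS1 : by' ∈ S1 := by rw [hS1']; simp
    have hbzS2 : bz ∈ S2 := by rw [hS2']; simp
    have hbyS2 : by' ∉ S2 := by
      intro h
      have hmem : by' ∈ S1 ∩ S2 := Finset.mem_inter.mpr ⟨hbyS1, h⟩
      rw [hbx, Finset.mem_singleton] at hmem
      exact hby'ne hmem.symm
    have hbzS1 : bz ∉ S1 := by
      intro h
      have hmem : bz ∈ S1 ∩ S2 := Finset.mem_inter.mpr ⟨h, hbzS2⟩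
      rw [hbx, Finset.mem_singleton] at hmem
      exact hbzne hmem.symm
    have hbybz : by' ≠ bz := fun h => hbyS2 (h ▸ hbzS2)
    have hmemS1 : ∀ w ∈ S1, G.Adj c1 w ∧ G.dist u w = i + 1 := by
      intro w hw
      rw [Finset.mem_inter] at hw
      refine ⟨(SimpleGraph.mem_neighborFinset _ _ _).mp hw.1, ?_⟩
      have h' := hw.2
      simp only [Finset.mem_insert, Finset.mem_singleton] at h'
      exact (memB w).mpr h'
    have hmemS2 : ∀ w ∈ S2, G.Adj c2 w ∧ G.dist u w = i + 1 := by
      intro w hw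
      rw [Finset.mem_inter] at hw
      refine ⟨(SimpleGraph.mem_neighborFinset _ _ _).mp hw.1, ?_⟩
      have h' := hw.2
      simp only [Finset.mem_insert, Finset.mem_singleton] at h'
      exact (memB w).mpr h'
    obtain ⟨hadjc1bx, hlbx⟩ := hmemS1 bx hbxS1
    obtain ⟨hadjc1by, hlby⟩ := hmemS1 by' hbyS1
    obtain ⟨hadjc2bx, _⟩ := hmemS2 bx hbxS2
    obtain ⟨hadjc2bz, hlbz⟩ := hmemS2 bz hbzS2
    have hnc1bz : ¬ G.Adj c1 bz := fun h => hbzS1 (Finset.mem_inter.mpr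
      ⟨(SimpleGraph.mem_neighborFinset _ _ _).mpr h,
        by rcases (memB bz).mp hlbz with rfl | rfl | rfl <;> simp⟩)
    have hnc2by : ¬ G.Adj c2 by' := fun h => hbyS2 (Finset.mem_inter.mpr
      ⟨(SimpleGraph.mem_neighborFinset _ _ _).mpr h,
        by rcases (memB by').mp hlby with rfl | rfl | rfl <;> simp⟩)
    obtain ⟨ax, hax, hlax⟩ := hpredB hlbx
    obtain ⟨ay, hay, hlay⟩ := hpredB hlby
    obtain ⟨az, haz, hlaz⟩ := hpredB hlbz
    have hnaxby : ¬ G.Adj ax by' := by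
      intro h
      have heq := hcn hby'ne hax.symm h.symm hadjc1bx.symm hadjc1by.symm
      exact hnel (by rw [hlax, hlc1]; omega) heq
    have hnaxbz : ¬ G.Adj ax bz := by
      intro h
      have heq := hcn hbzne hax.symm h.symm hadjc2bx.symm hadjc2bz.symm
      exact hnel (by rw [hlax, hlc2]; omega) heq
    have hayax : ay ≠ ax := fun h => hnaxby (h ▸ hay)
    have hazax : az ≠ ax := fun h => hnaxbz (h ▸ haz)
    have hayaz : ay = az := by
      rcases (memA ax).mp hlax with rfl | rfl <;>
        rcases (memA ay).mp hlay with h' | h' <;>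
        rcases (memA az).mp hlaz with h'' | h'' <;>
        first
          | (exact absurd h' hayax) | (exact absurd h'' hazax)
          | (rw [h', h''])
    subst hayaz
    -- now ay is adjacent to both by' and bz
    have hnbybz : ¬ G.Adj by' bz := by
      intro h
      have heq := hcn (show by' ≠ c2 from hnel (by rw [hlby, hlc2]; omega))
        h hadjc2bz hadjc1by.symm hcc.symm
      exact hnel (by rw [hlbz, hlc1]; omega) heq
    have hBset : ∀ w, G.dist u w = i + 1 → w = bx ∨ w = by' ∨ w = bz := by
      intro w hw
      have hwB := (memB w).mp hw
      have hx' := (memB bx).mp hlbx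
      have hy' := (memB by').mp hlby
      have hz' := (memB bz).mp hlbz
      rcases hx' with rfl | rfl | rfl <;> rcases hy' with rfl | rfl | rfl <;>
        rcases hz' with rfl | rfl | rfl <;>
        first
          | (exact absurd rfl hby'ne)
          | (exact absurd rfl hbzne)
          | (exact absurd rfl hbybz)
          | (rcases hwB with rfl | rfl | rfl <;> simp)
    have hcard3 : ∀ p q r : V, ({p, q, r} : Finset V).card ≤ 3 := by
      intro p q r
      have h4b := Finset.card_insert_le p ({q, r} : Finset V)
      have h4c := Finset.card_insert_le q ({r} : Finset V)
      simp only [Finset.card_singleton] at h4c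
      omega
    have hnbr : ∀ b' c' : V, G.dist u b' = i + 1 → G.dist u c' = i + 2 →
        G.Adj ay b' → ¬ G.Adj ax b' → G.Adj c' b' → (∀ w', G.Adj b' w' →
          G.dist u w' = i + 2 → w' = c') → (b' ≠ bx) →
        (∀ w', G.Adj b' w' → G.dist u w' = i + 1 → w' = bx) →
        G.Adj b' bx := by
      intro b' c' hlb' hlc' hayb' hnaxb' hcb' hw2 hbnex hw1
      have hsubN : G.neighborFinset b' ⊆ ({ay, bx, c'} : Finset V) := by
        intro w hw
        rw [SimpleGraph.mem_neighborFinset] at hw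
        obtain ⟨l1, l2⟩ := hlevel hw
        rw [hlb'] at l1 l2
        have hw3 := hcap w
        have hcases : G.dist u w = i ∨ G.dist u w = i + 1 ∨ G.dist u w = i + 2 := by
          clear * - l1 l2 hw3; omega
        simp only [Finset.mem_insert, Finset.mem_singleton]
        rcases hcases with h | h | h
        · left
          have hwax : w ≠ ax := fun he => hnaxb' (he ▸ hw.symm)
          rcases (memA w).mp h with rfl | rfl <;>
            rcases (memA ax).mp hlax with h' | h' <;>
            rcases (memA ay).mp hlay with h'' | h'' <;>
            first
              | (exact absurd h'.symm hwax)
              | (exact absurd (h''.trans h'.symm) hayax)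
              | (exact h''.symm)
        · exact Or.inr (Or.inl (hw1 w hw h))
        · exact Or.inr (Or.inr (hw2 w hw h))
      have hNcard := hdeg b'
      have heq := Finset.eq_of_subset_of_card_le hsubN
        (le_trans (hcard3 ay bx c') hNcard)
      have : bx ∈ G.neighborFinset b' := by rw [heq]; simp
      exact (SimpleGraph.mem_neighborFinset _ _ _).mp this
    have hadjbybx : G.Adj by' bx := by
      refine hnbr by' c1 hlby hlc1 hay hnaxby hadjc1by ?_ hby'ne.symm ?_
      · intro w' hw' hl'
        rcases (memC w').mp hl' with rfl | rfl
        · rfl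
        · exact absurd hw'.symm hnc2by
      · intro w' hw' hl'
        rcases hBset w' hl' with rfl | rfl | rfl
        · rfl
        · exact absurd rfl hw'.ne
        · exact absurd hw' hnbybz
    have hadjbzbx : G.Adj bz bx := by
      refine hnbr bz c2 hlbz hlc2 haz hnaxbz hadjc2bz ?_ hbzne.symm ?_
      · intro w' hw' hl'
        rcases (memC w').mp hl' with rfl | rfl
        · exact absurd hw'.symm hnc1bz
        · rfl
      · intro w' hw' hl'
        rcases hBset w' hl' with rfl | rfl | rfl
        · rfl
        · exact absurd hw'.symm hnbybz
        · exact absurd rfl hw'.ne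
    have heq := hcn hbybz hay.symm haz.symm hadjbybx hadjbzbx
    exact hnel (by rw [hlay, hlbx]; omega) heq
  · -- c1 not adjacent to c2
    have hs1 : G.neighborFinset c1 ⊆ ({b1, b2, b3} : Finset V) := by
      intro w hw
      have h' := hsub1 hw
      rw [SimpleGraph.mem_neighborFinset] at hw
      simp only [Finset.mem_insert, Finset.mem_singleton] at h' ⊢
      rcases h' with h | h | h | rfl
      · exact Or.inl h
      · exact Or.inr (Or.inl h)
      · exact Or.inr (Or.inr h)
      · exact absurd hw hcc
    have hs2 : G.neighborFinset c2 ⊆ ({b1, b2, b3} : Finset V) := by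
      intro w hw
      have h' := hsub2 hw
      rw [SimpleGraph.mem_neighborFinset] at hw
      simp only [Finset.mem_insert, Finset.mem_singleton] at h' ⊢
      rcases h' with h | h | h | rfl
      · exact Or.inl h
      · exact Or.inr (Or.inl h)
      · exact Or.inr (Or.inr h)
      · exact absurd hw.symm hcc
    have hunion : (G.neighborFinset c1 ∪ G.neighborFinset c2).card ≤ 3 := by
      have hsub4 := Finset.card_le_card (Finset.union_subset hs1 hs2)
      omega
    have hcards := Finset.card_inter_add_card_union (G.neighborFinset c1) (G.neighborFinset c2)
    have hd1 := hdeg c1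
    have hd2 := hdeg c2
    obtain ⟨x, hx, y, hy, hxy⟩ := Finset.one_lt_card.mp
      (show 1 < (G.neighborFinset c1 ∩ G.neighborFinset c2).card by omega)
    simp only [Finset.mem_inter, SimpleGraph.mem_neighborFinset] at hx hy
    exact hxy (hcn hc hx.1 hx.2 hy.1 hy.2)

set_option maxHeartbeats 1000000 in
theorem levels_two_three_two {V : Type*} [Fintype V] (G : SimpleGraph V)
    (hconn : G.Connected) (hC4 : C4Free G) (hec : EdgeConnAtLeast G 3)
    (u : V) (d : ℕ)
    (hdiam : ∀ v w : V, G.dist v w ≤ d) (hecc : ∃ v, G.dist u v = d)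
    (n : ℕ → ℕ) (hn : ∀ i, n i = {v : V | G.dist u v = i}.ncard)
    (i : ℕ) (hi : i + 2 ≤ d)
    (h1 : n i = 2) (h2 : n (i + 1) = 3) (h3 : n (i + 2) = 2) :
    ({e : Sym2 V | e ∈ G.edgeSet ∧ ∀ v ∈ e, G.dist u v = i + 1}.ncard = 1 ∨
      {e : Sym2 V | e ∈ G.edgeSet ∧ ∀ v ∈ e, G.dist u v = i + 1}.ncard = 2) ∧
    i + 3 ≤ d := by
  classical
  rw [hn i] at h1
  rw [hn (i + 1)] at h2
  rw [hn (i + 2)] at h3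
  obtain ⟨a1, a2, ha, hA⟩ := Set.ncard_eq_two.mp h1
  obtain ⟨b1, b2, b3, hb12, hb13, hb23, hB⟩ := Set.ncard_eq_three.mp h2
  obtain ⟨c1, c2, hc, hC⟩ := Set.ncard_eq_two.mp h3
  have memA : ∀ v, G.dist u v = i ↔ (v = a1 ∨ v = a2) := fun v => by
    have h := Set.ext_iff.mp hA v; simpa using h
  have memB : ∀ v, G.dist u v = i + 1 ↔ (v = b1 ∨ v = b2 ∨ v = b3) := fun v => by
    have h := Set.ext_iff.mp hB v; simpa using h
  have memC : ∀ v, G.dist u v = i + 2 ↔ (v = c1 ∨ v = c2) := fun v => by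
    have h := Set.ext_iff.mp hC v; simpa using h
  have hla1 : G.dist u a1 = i := (memA a1).mpr (Or.inl rfl)
  have hla2 : G.dist u a2 = i := (memA a2).mpr (Or.inr rfl)
  have hlb1 : G.dist u b1 = i + 1 := (memB b1).mpr (Or.inl rfl)
  have hlb2 : G.dist u b2 = i + 1 := (memB b2).mpr (Or.inr (Or.inl rfl))
  have hlb3 : G.dist u b3 = i + 1 := (memB b3).mpr (Or.inr (Or.inr rfl))
  have hlc1 : G.dist u c1 = i + 2 := (memC c1).mpr (Or.inl rfl)
  have hlc2 : G.dist u c2 = i + 2 := (memC c2).mpr (Or.inr rfl)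
  have hnel : ∀ {x y : V}, G.dist u x ≠ G.dist u y → x ≠ y := fun h he => h (by rw [he])
  have hdeg : ∀ v, 3 ≤ (G.neighborFinset v).card := by
    intro v
    exact min_deg_aux hec (show a1 ≠ b1 from hnel (by rw [hla1, hlb1]; omega)) v
  have hcn : ∀ {x y a b : V}, x ≠ y → G.Adj x a → G.Adj y a → G.Adj x b → G.Adj y b →
      a = b := fun h1 h2 h3 h4 h5 => cn_aux hC4 h1 h2 h3 h4 h5
  have hlevel : ∀ {v w : V}, G.Adj v w →
      G.dist u w ≤ G.dist u v + 1 ∧ G.dist u v ≤ G.dist u w + 1 :=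
    fun h => ⟨adj_dist_aux hconn u h, adj_dist_aux hconn u h.symm⟩
  have hpredB : ∀ {v : V}, G.dist u v = i + 1 → ∃ a, G.Adj a v ∧ G.dist u a = i :=
    fun h => exists_pred_aux hconn h
  have hpredC : ∀ {v : V}, G.dist u v = i + 2 → ∃ b, G.Adj b v ∧ G.dist u b = i + 1 :=
    fun h => exists_pred_aux hconn (k := i + 1) (by omega)
  -- Upper bound: not all three possible edges inside B are present
  have hnotall : ¬(G.Adj b1 b2 ∧ G.Adj b1 b3 ∧ G.Adj b2 b3) := by
    rintro ⟨h12, h13, h23⟩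
    obtain ⟨x1, hx1a, hx1l⟩ := hpredB hlb1
    obtain ⟨x2, hx2a, hx2l⟩ := hpredB hlb2
    obtain ⟨x3, hx3a, hx3l⟩ := hpredB hlb3
    have d12 : x1 ≠ x2 := by
      rintro rfl
      exact hnel (by rw [hx1l, hlb3]; omega) (hcn hb12 hx1a.symm hx2a.symm h13 h23)
    have d13 : x1 ≠ x3 := by
      rintro rfl
      exact hnel (by rw [hx1l, hlb2]; omega) (hcn hb13 hx1a.symm hx3a.symm h12 h23.symm)
    have d23 : x2 ≠ x3 := by
      rintro rfl
      exact hnel (by rw [hx2l, hlb1]; omega) (hcn hb23 hx2a.symm hx3a.symm h12.symm h13.symm)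
    rcases (memA x1).mp hx1l with rfl | rfl <;> rcases (memA x2).mp hx2l with rfl | rfl <;>
      rcases (memA x3).mp hx3l with rfl | rfl <;>
      first
        | exact d12 rfl
        | exact d13 rfl
        | exact d23 rfl
  -- Lower bound : at least one edge inside B
  have hone : G.Adj b1 b2 ∨ G.Adj b1 b3 ∨ G.Adj b2 b3 := by
    by_contra hno
    push_neg at hno
    obtain ⟨h12, h13, h23⟩ := hno
    have hsub : ∀ b, G.dist u b = i + 1 → (∀ b', G.dist u b' = i + 1 → ¬ G.Adj b b') →
        G.neighborFinset b ⊆ ({a1, a2, c1, c2} : Finset V) := by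
      intro b hb hnb w hw
      rw [SimpleGraph.mem_neighborFinset] at hw
      obtain ⟨l1, l2⟩ := hlevel hw
      rw [hb] at l1 l2
      have hcases : G.dist u w = i ∨ G.dist u w = i + 1 ∨ G.dist u w = i + 2 := by omega
      rcases hcases with h | h | h
      · rcases (memA w).mp h with rfl | rfl <;> simp
      · exact absurd hw (hnb w h)
      · rcases (memC w).mp h with rfl | rfl <;> simp
    have hs1 : G.neighborFinset b1 ⊆ ({a1, a2, c1, c2} : Finset V) := by
      refine hsub b1 hlb1 ?_
      intro b' hb' hadj
      rcases (memB b').mp hb' with rfl | rfl | rfl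
      · exact hadj.ne rfl
      · exact h12 hadj
      · exact h13 hadj
    have hs2 : G.neighborFinset b2 ⊆ ({a1, a2, c1, c2} : Finset V) := by
      refine hsub b2 hlb2 ?_
      intro b' hb' hadj
      rcases (memB b').mp hb' with rfl | rfl | rfl
      · exact h12 hadj.symm
      · exact hadj.ne rfl
      · exact h23 hadj
    have h4a := Finset.card_insert_le a1 ({a2, c1, c2} : Finset V)
    have h4b := Finset.card_insert_le a2 ({c1, c2} : Finset V)
    have h4c := Finset.card_insert_le c1 ({c2} : Finset V)
    simp only [Finset.card_singleton] at h4c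
    have hunion : (G.neighborFinset b1 ∪ G.neighborFinset b2).card ≤ 4 := by
      have hsub4 := Finset.card_le_card (Finset.union_subset hs1 hs2)
      omega
    have hcards := Finset.card_inter_add_card_union (G.neighborFinset b1) (G.neighborFinset b2)
    have hd1 := hdeg b1
    have hd2 := hdeg b2
    obtain ⟨x, hx, y, hy, hxy⟩ := Finset.one_lt_card.mp
      (show 1 < (G.neighborFinset b1 ∩ G.neighborFinset b2).card by omega)
    simp only [Finset.mem_inter, SimpleGraph.mem_neighborFinset] at hx hy
    exact hxy (hcn hb12 hx.1 hx.2 hy.1 hy.2)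
  have hd3 : i + 3 ≤ d := by
    by_contra hd
    have hcap : ∀ v, G.dist u v ≤ i + 2 := fun v => by have := hdiam u v; omega
    exact stepD_aux hc memA memB memC hdeg (fun h1 h2 h3 h4 h5 => hcn h1 h2 h3 h4 h5)
      (fun h => hlevel h) (fun h => hpredB h) hcap
  refine ⟨?_, hd3⟩
  have fwd2 : ∀ e ∈ {e : Sym2 V | e ∈ G.edgeSet ∧ ∀ v ∈ e, G.dist u v = i + 1},
      (e = s(b1, b2) ∧ G.Adj b1 b2) ∨ (e = s(b1, b3) ∧ G.Adj b1 b3) ∨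
      (e = s(b2, b3) ∧ G.Adj b2 b3) := by
    intro e he
    induction e using Sym2.ind with
    | _ x y =>
      obtain ⟨hadj', hlv⟩ := he
      have hadj : G.Adj x y := G.mem_edgeSet.mp hadj'
      have hx : G.dist u x = i + 1 := hlv x (Sym2.mem_iff.mpr (Or.inl rfl))
      have hy : G.dist u y = i + 1 := hlv y (Sym2.mem_iff.mpr (Or.inr rfl))
      have hne := hadj.ne
      have htri : s(x, y) = s(b1, b2) ∨ s(x, y) = s(b1, b3) ∨ s(x, y) = s(b2, b3) := by
        rcases (memB x).mp hx with rfl | rfl | rfl <;>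
          rcases (memB y).mp hy with rfl | rfl | rfl <;>
          first
            | (exact absurd rfl hne)
            | (exact Or.inl rfl)
            | (exact Or.inl Sym2.eq_swap)
            | (exact Or.inr (Or.inl rfl))
            | (exact Or.inr (Or.inl Sym2.eq_swap))
            | (exact Or.inr (Or.inr rfl))
            | (exact Or.inr (Or.inr Sym2.eq_swap))
      rcases htri with h | h | h
      · exact Or.inl ⟨h, G.mem_edgeSet.mp (h ▸ hadj')⟩
      · exact Or.inr (Or.inl ⟨h, G.mem_edgeSet.mp (h ▸ hadj')⟩)
      · exact Or.inr (Or.inr ⟨h, G.mem_edgeSet.mp (h ▸ hadj')⟩)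
  have hsetin : ∀ {p q : V}, G.Adj p q → G.dist u p = i + 1 → G.dist u q = i + 1 →
      s(p, q) ∈ {e : Sym2 V | e ∈ G.edgeSet ∧ ∀ v ∈ e, G.dist u v = i + 1} := by
    intro p q h hp hq
    refine ⟨G.mem_edgeSet.mpr h, ?_⟩
    intro v hv
    rcases Sym2.mem_iff.mp hv with rfl | rfl
    · exact hp
    · exact hq
  have hne1213 : s(b1, b2) ≠ s(b1, b3) := by
    intro h
    rcases Sym2.eq_iff.mp h with ⟨-, h'⟩ | ⟨h', h''⟩
    · exact hb23 h'
    · exact hb12 h''.symm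
  have hne1223 : s(b1, b2) ≠ s(b2, b3) := by
    intro h
    rcases Sym2.eq_iff.mp h with ⟨h', -⟩ | ⟨h', -⟩
    · exact hb12 h'
    · exact hb13 h'
  have hne1323 : s(b1, b3) ≠ s(b2, b3) := by
    intro h
    rcases Sym2.eq_iff.mp h with ⟨h', -⟩ | ⟨h', -⟩
    · exact hb12 h'
    · exact hb13 h'
  by_cases h12 : G.Adj b1 b2 <;> by_cases h13 : G.Adj b1 b3 <;> by_cases h23 : G.Adj b2 b3
  · exact absurd ⟨h12, h13, h23⟩ hnotall
  · -- T T F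
    right
    have hEq : {e : Sym2 V | e ∈ G.edgeSet ∧ ∀ v ∈ e, G.dist u v = i + 1}
        = {s(b1, b2), s(b1, b3)} := by
      apply Set.Subset.antisymm
      · intro e he
        rcases fwd2 e he with ⟨rfl, -⟩ | ⟨rfl, -⟩ | ⟨-, h⟩
        · exact Or.inl rfl
        · exact Or.inr rfl
        · exact absurd h h23
      · intro e he
        rcases he with rfl | he
        · exact hsetin h12 hlb1 hlb2
        · rw [Set.mem_singleton_iff] at he
          subst he
          exact hsetin h13 hlb1 hlb3
    rw [hEq]
    exact Set.ncard_pair hne1213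
  · -- T F T
    right
    have hEq : {e : Sym2 V | e ∈ G.edgeSet ∧ ∀ v ∈ e, G.dist u v = i + 1}
        = {s(b1, b2), s(b2, b3)} := by
      apply Set.Subset.antisymm
      · intro e he
        rcases fwd2 e he with ⟨rfl, -⟩ | ⟨-, h⟩ | ⟨rfl, -⟩
        · exact Or.inl rfl
        · exact absurd h h13
        · exact Or.inr rfl
      · intro e he
        rcases he with rfl | he
        · exact hsetin h12 hlb1 hlb2
        · rw [Set.mem_singleton_iff] at he
          subst he
          exact hsetin h23 hlb2 hlb3
    rw [hEq]
    exact Set.ncard_pair hne1223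
  · -- T F F
    left
    have hEq : {e : Sym2 V | e ∈ G.edgeSet ∧ ∀ v ∈ e, G.dist u v = i + 1}
        = {s(b1, b2)} := by
      apply Set.Subset.antisymm
      · intro e he
        rcases fwd2 e he with ⟨rfl, -⟩ | ⟨-, h⟩ | ⟨-, h⟩
        · rfl
        · exact absurd h h13
        · exact absurd h h23
      · intro e he
        rw [Set.mem_singleton_iff] at he
        subst he
        exact hsetin h12 hlb1 hlb2
    rw [hEq]
    exact Set.ncard_singleton _
  · -- F T T
    right
    have hEq : {e : Sym2 V | e ∈ G.edgeSet ∧ ∀ v ∈ e, G.dist u v = i + 1}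
        = {s(b1, b3), s(b2, b3)} := by
      apply Set.Subset.antisymm
      · intro e he
        rcases fwd2 e he with ⟨-, h⟩ | ⟨rfl, -⟩ | ⟨rfl, -⟩
        · exact absurd h h12
        · exact Or.inl rfl
        · exact Or.inr rfl
      · intro e he
        rcases he with rfl | he
        · exact hsetin h13 hlb1 hlb3
        · rw [Set.mem_singleton_iff] at he
          subst he
          exact hsetin h23 hlb2 hlb3
    rw [hEq]
    exact Set.ncard_pair hne1323
  · -- F T F
    left
    have hEq : {e : Sym2 V | e ∈ G.edgeSet ∧ ∀ v ∈ e, G.dist u v = i + 1}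
        = {s(b1, b3)} := by
      apply Set.Subset.antisymm
      · intro e he
        rcases fwd2 e he with ⟨-, h⟩ | ⟨rfl, -⟩ | ⟨-, h⟩
        · exact absurd h h12
        · rfl
        · exact absurd h h23
      · intro e he
        rw [Set.mem_singleton_iff] at he
        subst he
        exact hsetin h13 hlb1 hlb3
    rw [hEq]
    exact Set.ncard_singleton _
  · -- F F T
    left
    have hEq : {e : Sym2 V | e ∈ G.edgeSet ∧ ∀ v ∈ e, G.dist u v = i + 1}
        = {s(b2, b3)} := by
      apply Set.Subset.antisymm
      · intro e he
        rcases fwd2 e he with ⟨-, h⟩ | ⟨-, h⟩ | ⟨rfl, -⟩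
        · exact absurd h h12
        · exact absurd h h13
        · rfl
      · intro e he
        rw [Set.mem_singleton_iff] at he
        subst he
        exact hsetin h23 hlb2 hlb3
    rw [hEq]
    exact Set.ncard_singleton _
  · -- F F F
    rcases hone with h | h | h
    · exact absurd h h12
    · exact absurd h h13
    · exact absurd h h23
end

section
/- Let G be a connected C4-free graph with edge-connectivity at least 3, let u be a vertex of maximum eccentricity d, and let n_i denote the number of vertices at distance i from u. If (n_i, n_{i+1}, n_{i+2}, n_{i+3}) = (2,3,2,2) for some i ≤ d-3, then i ≤ d-4 and n_{i+4} ≥ 4. -/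
private lemma walk_cross {V : Type*} {G : SimpleGraph V} {S : Set V} :
    ∀ {x y : V}, G.Walk x y → x ∈ S → y ∉ S → ∃ p q, p ∈ S ∧ q ∉ S ∧ G.Adj p q := by
  intro x y w
  induction w with
  | nil => intro hx hy; exact absurd hx hy
  | @cons a b c h p ih =>
    intro hx hy
    by_cases hb : b ∈ S
    · exact ih hb hy
    · exact ⟨a, b, hx, hb, h⟩

private lemma cut2 {V : Type*} {G : SimpleGraph V} (hec : EdgeConnAtLeast G 3)
    (e1 e2 : Sym2 V) (S : Set V) (u0 v0 : V) (hu : u0 ∈ S) (hv : v0 ∉ S)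
    (hcross : ∀ p q, p ∈ S → q ∉ S → G.Adj p q → s(p, q) = e1 ∨ s(p, q) = e2) : False := by
  classical
  have hcard : ({e1, e2} : Finset (Sym2 V)).card < 3 :=
    lt_of_le_of_lt (Finset.card_insert_le _ _) (by simp)
  have hconn' := hec {e1, e2} hcard
  obtain ⟨w⟩ := hconn'.preconnected u0 v0
  obtain ⟨p, q, hp, hq, hadj⟩ := walk_cross w hu hv
  rw [SimpleGraph.deleteEdges_adj] at hadj
  refine hadj.2 ?_
  rcases hcross p q hp hq hadj.1 with h | h <;> simp [h]

private lemma core {V : Type*} [Fintype V] {G : SimpleGraph V}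
    (hconn : G.Connected) (hC4 : C4Free G) (hec : EdgeConnAtLeast G 3)
    {u : V} {d : ℕ} (hdiam : ∀ v w : V, G.dist v w ≤ d) {i : ℕ}
    (hL1 : ({v : V | G.dist u v = i + 1}).ncard = 3)
    {a b c e : V} (hab : a ≠ b) (hce : c ≠ e)
    (hL2 : {v : V | G.dist u v = i + 2} = {a, b})
    (hL3 : {v : V | G.dist u v = i + 3} = {c, e})
    (hac : G.Adj a c) (hae : G.Adj a e) (hbc : G.Adj b c) (hbe : ¬ G.Adj b e) :
    i + 4 ≤ d ∧ 4 ≤ ({v : V | G.dist u v = i + 4}).ncard := by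
  have hstep : ∀ x y : V, G.Adj x y → G.dist u y ≤ G.dist u x + 1 := by
    intro x y h
    have h1 : G.dist x y = 1 := SimpleGraph.dist_eq_one_iff_adj.mpr h
    have h2 := hconn.dist_triangle (u := u) (v := x) (w := y)
    omega
  have hm2 : ∀ p : V, G.dist u p = i + 2 ↔ (p = a ∨ p = b) := by
    intro p
    have h : (p ∈ {v : V | G.dist u v = i + 2}) ↔ p ∈ ({a, b} : Set V) := by rw [hL2]
    simpa [Set.mem_setOf_eq, Set.mem_insert_iff] using h
  have hm3 : ∀ p : V, G.dist u p = i + 3 ↔ (p = c ∨ p = e) := by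
    intro p
    have h : (p ∈ {v : V | G.dist u v = i + 3}) ↔ p ∈ ({c, e} : Set V) := by rw [hL3]
    simpa [Set.mem_setOf_eq, Set.mem_insert_iff] using h
  have hDu : G.dist u u = 0 := SimpleGraph.dist_self
  have hDa : G.dist u a = i + 2 := (hm2 a).mpr (Or.inl rfl)
  have hDb : G.dist u b = i + 2 := (hm2 b).mpr (Or.inr rfl)
  have hDc : G.dist u c = i + 3 := (hm3 c).mpr (Or.inl rfl)
  have hDe : G.dist u e = i + 3 := (hm3 e).mpr (Or.inr rfl)
  have hne : ∀ {x y : V} {jx jy : ℕ}, G.dist u x = jx → G.dist u y = jy → jx ≠ jy → x ≠ y := by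
    intro x y jx jy hx hy hj h
    apply hj
    rw [← hx, h, hy]
  -- Step A : c and e are not adjacent
  have hcd : ¬ G.Adj c e := by
    intro hcd
    have hab' : ¬ G.Adj a b := by
      intro h
      exact hC4 ⟨a, b, c, e, hab, hne hDa hDc (by omega), hne hDa hDe (by omega),
        hne hDb hDc (by omega), hne hDb hDe (by omega), hce, h, hbc, hcd, hae.symm⟩
    have hAB : ∀ v, G.Adj a v → G.Adj b v → v = c := by
      intro v h1 h2
      by_contra hvc
      exact hC4 ⟨a, v, b, c, h1.ne, hab, hne hDa hDc (by omega), h2.ne', hvc,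
        hne hDb hDc (by omega), h1, h2.symm, hbc, hac.symm⟩
    have hB : ∀ v0 : V, ∃ v, G.dist u v = i + 1 ∧ G.Adj b v ∧ v ≠ v0 := by
      intro v0
      by_contra hcon
      push_neg at hcon
      refine cut2 hec (s(b, v0)) (s(b, c)) {x : V | x ≠ b} u b
        (hne hDu hDb (by omega)) (by simp) ?_
      intro p q hp hq hadj
      have hq' : q = b := by simpa using hq
      rw [hq'] at hadj ⊢
      have h1 := hstep b p hadj.symm
      have h2 := hstep p b hadj
      have h3 : G.dist u p = i + 1 ∨ G.dist u p = i + 2 ∨ G.dist u p = i + 3 := by omega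
      rcases h3 with h | h | h
      · have hpv := hcon p h hadj.symm
        exact Or.inl (by rw [hpv, Sym2.eq_swap])
      · rcases (hm2 p).mp h with rfl | rfl
        · exact absurd hadj hab'
        · exact absurd rfl hp
      · rcases (hm3 p).mp h with rfl | rfl
        · exact Or.inr Sym2.eq_swap
        · exact absurd hadj.symm hbe
    obtain ⟨v1, hv1d, hv1b, _⟩ := hB u
    obtain ⟨v2, hv2d, hv2b, hv21⟩ := hB v1
    have hA : ∀ v0 : V, ∃ v, G.dist u v = i + 1 ∧ G.Adj a v ∧ v ≠ v0 := by
      intro v0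
      by_contra hcon
      push_neg at hcon
      refine cut2 hec (s(a, v0)) (s(b, c)) {x : V | G.dist u x ≤ i + 1 ∨ x = b} u a
        (Or.inl (by rw [hDu]; omega)) ?_ ?_
      · simp only [Set.mem_setOf_eq]
        push_neg
        exact ⟨by omega, hab⟩
      · intro p q hp hq hadj
        simp only [Set.mem_setOf_eq] at hp hq
        push_neg at hq
        obtain ⟨hq1, hq2⟩ := hq
        rcases hp with hp1 | hpb
        · have h1 := hstep p q hadj
          have h2 : G.dist u q = i + 2 := by omega
          have h3 : G.dist u p = i + 1 := by
            have := hstep q p hadj.symm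
            omega
          rcases (hm2 q).mp h2 with rfl | rfl
          · have hpv := hcon p h3 hadj.symm
            exact Or.inl (by rw [hpv, Sym2.eq_swap])
          · exact absurd rfl hq2
        · rw [hpb] at hadj ⊢
          have h1 := hstep b q hadj
          have h2 : G.dist u q = i + 2 ∨ G.dist u q = i + 3 := by omega
          rcases h2 with h | h
          · rcases (hm2 q).mp h with rfl | rfl
            · exact absurd hadj.symm hab'
            · exact absurd rfl hq2
          · rcases (hm3 q).mp h with rfl | rfl
            · exact Or.inr rfl
            · exact absurd hadj hbe
    obtain ⟨u1, hu1d, hu1a, _⟩ := hA u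
    obtain ⟨u2, hu2d, hu2a, hu21⟩ := hA u1
    have hcross_ne : ∀ vx, G.dist u vx = i + 1 → G.Adj a vx → G.Adj b vx → False := by
      intro vx hd h1 h2
      have h := hAB vx h1 h2
      rw [h] at hd
      omega
    have h11 : u1 ≠ v1 := fun h => hcross_ne u1 hu1d hu1a (by rw [h]; exact hv1b)
    have h12 : u1 ≠ v2 := fun h => hcross_ne u1 hu1d hu1a (by rw [h]; exact hv2b)
    have h21 : u2 ≠ v1 := fun h => hcross_ne u2 hu2d hu2a (by rw [h]; exact hv1b)
    have h22 : u2 ≠ v2 := fun h => hcross_ne u2 hu2d hu2a (by rw [h]; exact hv2b)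
    have hsub : ({u1, u2, v1, v2} : Set V) ⊆ {v : V | G.dist u v = i + 1} := by
      intro x hx
      simp only [Set.mem_insert_iff, Set.mem_singleton_iff] at hx
      rcases hx with rfl | rfl | rfl | rfl <;> assumption
    have hcard : ({u1, u2, v1, v2} : Set V).ncard = 4 := by
      rw [Set.ncard_insert_of_notMem (by simp [Ne.symm hu21, h11, h12]),
        Set.ncard_insert_of_notMem (by simp [h21, h22]),
        Set.ncard_insert_of_notMem (by simp [Ne.symm hv21]), Set.ncard_singleton]
    have hle := Set.ncard_le_ncard hsub (Set.toFinite _)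
    omega
  -- Step B : the level i+4
  have hNcd : ∀ w, G.Adj c w → G.Adj e w → w = a := by
    intro w h1 h2
    by_contra hwa
    exact hC4 ⟨c, w, e, a, h1.ne, hce, hne hDc hDa (by omega), h2.ne', hwa,
      hne hDe hDa (by omega), h1, h2.symm, hae.symm, hac⟩
  have hNe : ∀ w0 : V, ∃ w, G.dist u w = i + 4 ∧ G.Adj e w ∧ w ≠ w0 := by
    intro w0
    by_contra hcon
    push_neg at hcon
    refine cut2 hec (s(a, e)) (s(e, w0)) {x : V | x ≠ e} u e
      (hne hDu hDe (by omega)) (by simp) ?_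
    intro p q hp hq hadj
    have hq' : q = e := by simpa using hq
    rw [hq'] at hadj ⊢
    have h1 := hstep e p hadj.symm
    have h2 := hstep p e hadj
    have h3 : G.dist u p = i + 2 ∨ G.dist u p = i + 3 ∨ G.dist u p = i + 4 := by omega
    rcases h3 with h | h | h
    · rcases (hm2 p).mp h with rfl | rfl
      · exact Or.inl rfl
      · exact absurd hadj hbe
    · rcases (hm3 p).mp h with rfl | rfl
      · exact absurd hadj hcd
      · exact absurd rfl hp
    · have hpw := hcon p h hadj.symm
      exact Or.inr (by rw [hpw, Sym2.eq_swap])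
  have hNc : ∀ w0 : V, ∃ w, G.dist u w = i + 4 ∧ G.Adj c w ∧ w ≠ w0 := by
    intro w0
    by_contra hcon
    push_neg at hcon
    refine cut2 hec (s(a, e)) (s(c, w0)) {x : V | G.dist u x ≤ i + 2 ∨ x = c} u e
      (Or.inl (by rw [hDu]; omega)) ?_ ?_
    · simp only [Set.mem_setOf_eq]
      push_neg
      exact ⟨by omega, Ne.symm hce⟩
    · intro p q hp hq hadj
      simp only [Set.mem_setOf_eq] at hp hq
      push_neg at hq
      obtain ⟨hq1, hq2⟩ := hq
      rcases hp with hp1 | hpc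
      · have h1 := hstep p q hadj
        have h2 : G.dist u q = i + 3 := by omega
        have h3 : G.dist u p = i + 2 := by
          have := hstep q p hadj.symm
          omega
        rcases (hm3 q).mp h2 with rfl | rfl
        · exact absurd rfl hq2
        · rcases (hm2 p).mp h3 with rfl | rfl
          · exact Or.inl rfl
          · exact absurd hadj hbe
      · rw [hpc] at hadj ⊢
        have h1 := hstep c q hadj
        have h2 : G.dist u q = i + 3 ∨ G.dist u q = i + 4 := by omega
        rcases h2 with h | h
        · rcases (hm3 q).mp h with rfl | rfl
          · exact absurd rfl hq2
          · exact absurd hadj hcd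
        · have hqw := hcon q h hadj
          exact Or.inr (by rw [hqw])
  obtain ⟨w1, hw1d, hw1c, _⟩ := hNc u
  obtain ⟨w2, hw2d, hw2c, hw21⟩ := hNc w1
  obtain ⟨w3, hw3d, hw3e, _⟩ := hNe u
  obtain ⟨w4, hw4d, hw4e, hw43⟩ := hNe w3
  have hx : ∀ wc wd : V, G.dist u wc = i + 4 → G.Adj c wc → G.Adj e wd → wc ≠ wd := by
    intro wc wd hdc h1 h2 h
    subst h
    have := hNcd wc h1 h2
    rw [this] at hdc
    omega
  constructor
  · have := hdiam u w3
    omega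
  · have hsub : ({w1, w2, w3, w4} : Set V) ⊆ {v : V | G.dist u v = i + 4} := by
      intro x hx'
      simp only [Set.mem_insert_iff, Set.mem_singleton_iff] at hx'
      rcases hx' with rfl | rfl | rfl | rfl <;> assumption
    have h13 : w1 ≠ w3 := hx w1 w3 hw1d hw1c hw3e
    have h14 : w1 ≠ w4 := hx w1 w4 hw1d hw1c hw4e
    have h23 : w2 ≠ w3 := hx w2 w3 hw2d hw2c hw3e
    have h24 : w2 ≠ w4 := hx w2 w4 hw2d hw2c hw4e
    have hcard : ({w1, w2, w3, w4} : Set V).ncard = 4 := by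
      rw [Set.ncard_insert_of_notMem (by simp [Ne.symm hw21, h13, h14]),
        Set.ncard_insert_of_notMem (by simp [h23, h24]),
        Set.ncard_insert_of_notMem (by simp [Ne.symm hw43]), Set.ncard_singleton]
    have hle := Set.ncard_le_ncard hsub (Set.toFinite _)
    omega

theorem levels_two_three_two_two {V : Type*} [Fintype V] (G : SimpleGraph V)
    (hconn : G.Connected) (hC4 : C4Free G) (hec : EdgeConnAtLeast G 3)
    (u : V) (d : ℕ)
    (hdiam : ∀ v w : V, G.dist v w ≤ d) (hecc : ∃ v, G.dist u v = d)
    (n : ℕ → ℕ) (hn : ∀ i, n i = {v : V | G.dist u v = i}.ncard)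
    (i : ℕ) (hi : i + 3 ≤ d)
    (h1 : n i = 2) (h2 : n (i + 1) = 3) (h3 : n (i + 2) = 2) (h4 : n (i + 3) = 2) :
    i + 4 ≤ d ∧ 4 ≤ n (i + 4) := by
  rw [hn] at h2 h3 h4 ⊢
  obtain ⟨a, b, hab, hL2⟩ := Set.ncard_eq_two.mp h3
  obtain ⟨c, e, hce, hL3⟩ := Set.ncard_eq_two.mp h4
  have hstep : ∀ x y : V, G.Adj x y → G.dist u y ≤ G.dist u x + 1 := by
    intro x y h
    have hxy : G.dist x y = 1 := SimpleGraph.dist_eq_one_iff_adj.mpr h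
    have htri := hconn.dist_triangle (u := u) (v := x) (w := y)
    omega
  have hm2 : ∀ p : V, G.dist u p = i + 2 ↔ (p = a ∨ p = b) := by
    intro p
    have h : (p ∈ {v : V | G.dist u v = i + 2}) ↔ p ∈ ({a, b} : Set V) := by rw [hL2]
    simpa [Set.mem_setOf_eq, Set.mem_insert_iff] using h
  have hm3 : ∀ p : V, G.dist u p = i + 3 ↔ (p = c ∨ p = e) := by
    intro p
    have h : (p ∈ {v : V | G.dist u v = i + 3}) ↔ p ∈ ({c, e} : Set V) := by rw [hL3]
    simpa [Set.mem_setOf_eq, Set.mem_insert_iff] using h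
  have hDu : G.dist u u = 0 := SimpleGraph.dist_self
  have hDa : G.dist u a = i + 2 := (hm2 a).mpr (Or.inl rfl)
  have hDb : G.dist u b = i + 2 := (hm2 b).mpr (Or.inr rfl)
  have hDc : G.dist u c = i + 3 := (hm3 c).mpr (Or.inl rfl)
  have hDe : G.dist u e = i + 3 := (hm3 e).mpr (Or.inr rfl)
  have hne : ∀ {x y : V} {jx jy : ℕ}, G.dist u x = jx → G.dist u y = jy → jx ≠ jy → x ≠ y := by
    intro x y jx jy hx hy hj h
    apply hj
    rw [← hx, h, hy]
  have hcut23 : ∀ e1 e2 : Sym2 V,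
      (∀ p q : V, G.dist u p = i + 2 → G.dist u q = i + 3 → G.Adj p q →
        s(p, q) = e1 ∨ s(p, q) = e2) → False := by
    intro e1 e2 hsub
    refine cut2 hec e1 e2 {x : V | G.dist u x ≤ i + 2} u c
      (by simp only [Set.mem_setOf_eq, hDu]; omega)
      (by simp only [Set.mem_setOf_eq, hDc]; omega) ?_
    intro p q hp hq hadj
    simp only [Set.mem_setOf_eq] at hp hq
    push_neg at hq
    have hq1 := hstep p q hadj
    have hq2 := hstep q p hadj.symm
    exact hsub p q (by omega) (by omega) hadj
  by_cases hac : G.Adj a c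
  · by_cases hae : G.Adj a e
    · by_cases hbc : G.Adj b c
      · by_cases hbe : G.Adj b e
        · exact absurd ⟨a, c, b, e, hac.ne, hab, hae.ne, hne hDc hDb (by omega), hce,
            hne hDb hDe (by omega), hac, hbc.symm, hbe, hae.symm⟩ hC4
        · exact core hconn hC4 hec hdiam h2 hab hce hL2 hL3 hac hae hbc hbe
      · by_cases hbe : G.Adj b e
        · exact core hconn hC4 hec hdiam h2 hab (Ne.symm hce) hL2
            (by rw [hL3, Set.pair_comm]) hae hac hbe hbc
        · exact ((hcut23 (s(a, c)) (s(a, e)) (by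
            intro p q hp hq hadj
            rcases (hm2 p).mp hp with rfl | rfl <;> rcases (hm3 q).mp hq with rfl | rfl <;>
              first
                | exact absurd hadj hac | exact absurd hadj hae
                | exact absurd hadj hbc | exact absurd hadj hbe
                | exact Or.inl rfl | exact Or.inr rfl))).elim
    · by_cases hbc : G.Adj b c
      · by_cases hbe : G.Adj b e
        · exact core hconn hC4 hec hdiam h2 (Ne.symm hab) hce
            (by rw [hL2, Set.pair_comm]) hL3 hbc hbe hac hae
        · exact ((hcut23 (s(a, c)) (s(b, c)) (by
            intro p q hp hq hadj
            rcases (hm2 p).mp hp with rfl | rfl <;> rcases (hm3 q).mp hq with rfl | rfl <;>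
              first
                | exact absurd hadj hac | exact absurd hadj hae
                | exact absurd hadj hbc | exact absurd hadj hbe
                | exact Or.inl rfl | exact Or.inr rfl))).elim
      · by_cases hbe : G.Adj b e
        · exact ((hcut23 (s(a, c)) (s(b, e)) (by
            intro p q hp hq hadj
            rcases (hm2 p).mp hp with rfl | rfl <;> rcases (hm3 q).mp hq with rfl | rfl <;>
              first
                | exact absurd hadj hac | exact absurd hadj hae
                | exact absurd hadj hbc | exact absurd hadj hbe
                | exact Or.inl rfl | exact Or.inr rfl))).elim
        · exact ((hcut23 (s(a, c)) (s(a, c)) (by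
            intro p q hp hq hadj
            rcases (hm2 p).mp hp with rfl | rfl <;> rcases (hm3 q).mp hq with rfl | rfl <;>
              first
                | exact absurd hadj hac | exact absurd hadj hae
                | exact absurd hadj hbc | exact absurd hadj hbe
                | exact Or.inl rfl | exact Or.inr rfl))).elim
  · by_cases hae : G.Adj a e
    · by_cases hbc : G.Adj b c
      · by_cases hbe : G.Adj b e
        · exact core hconn hC4 hec hdiam h2 (Ne.symm hab) (Ne.symm hce)
            (by rw [hL2, Set.pair_comm]) (by rw [hL3, Set.pair_comm]) hbe hbc hae hac
        · exact ((hcut23 (s(a, e)) (s(b, c)) (by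
            intro p q hp hq hadj
            rcases (hm2 p).mp hp with rfl | rfl <;> rcases (hm3 q).mp hq with rfl | rfl <;>
              first
                | exact absurd hadj hac | exact absurd hadj hae
                | exact absurd hadj hbc | exact absurd hadj hbe
                | exact Or.inl rfl | exact Or.inr rfl))).elim
      · by_cases hbe : G.Adj b e
        · exact ((hcut23 (s(a, e)) (s(b, e)) (by
            intro p q hp hq hadj
            rcases (hm2 p).mp hp with rfl | rfl <;> rcases (hm3 q).mp hq with rfl | rfl <;>
              first
                | exact absurd hadj hac | exact absurd hadj hae
                | exact absurd hadj hbc | exact absurd hadj hbe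
                | exact Or.inl rfl | exact Or.inr rfl))).elim
        · exact ((hcut23 (s(a, e)) (s(a, e)) (by
            intro p q hp hq hadj
            rcases (hm2 p).mp hp with rfl | rfl <;> rcases (hm3 q).mp hq with rfl | rfl <;>
              first
                | exact absurd hadj hac | exact absurd hadj hae
                | exact absurd hadj hbc | exact absurd hadj hbe
                | exact Or.inl rfl | exact Or.inr rfl))).elim
    · by_cases hbc : G.Adj b c
      · by_cases hbe : G.Adj b e
        · exact ((hcut23 (s(b, c)) (s(b, e)) (by
            intro p q hp hq hadj
            rcases (hm2 p).mp hp with rfl | rfl <;> rcases (hm3 q).mp hq with rfl | rfl <;>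
              first
                | exact absurd hadj hac | exact absurd hadj hae
                | exact absurd hadj hbc | exact absurd hadj hbe
                | exact Or.inl rfl | exact Or.inr rfl))).elim
        · exact ((hcut23 (s(b, c)) (s(b, c)) (by
            intro p q hp hq hadj
            rcases (hm2 p).mp hp with rfl | rfl <;> rcases (hm3 q).mp hq with rfl | rfl <;>
              first
                | exact absurd hadj hac | exact absurd hadj hae
                | exact absurd hadj hbc | exact absurd hadj hbe
                | exact Or.inl rfl | exact Or.inr rfl))).elim
      · by_cases hbe : G.Adj b e
        · exact ((hcut23 (s(b, e)) (s(b, e)) (by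
            intro p q hp hq hadj
            rcases (hm2 p).mp hp with rfl | rfl <;> rcases (hm3 q).mp hq with rfl | rfl <;>
              first
                | exact absurd hadj hac | exact absurd hadj hae
                | exact absurd hadj hbc | exact absurd hadj hbe
                | exact Or.inl rfl | exact Or.inr rfl))).elim
        · exact ((hcut23 (s(a, c)) (s(a, c)) (by
            intro p q hp hq hadj
            rcases (hm2 p).mp hp with rfl | rfl <;> rcases (hm3 q).mp hq with rfl | rfl <;>
              first
                | exact absurd hadj hac | exact absurd hadj hae
                | exact absurd hadj hbc | exact absurd hadj hbe
                | exact Or.inl rfl | exact Or.inr rfl))).elim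
end

section
/- Let G be a connected C4-free graph with edge-connectivity at least 4, let u be a vertex of maximum eccentricity d, and let n_i denote the number of vertices at distance i from u. Then n_{i-1} + n_i + n_{i+1} ≥ 9 for every i with 1 ≤ i ≤ d-1. -/
private lemma nat_le_one_add_choose (d : ℕ) : d ≤ 1 + d.choose 2 := by
  match d with
  | 0 => simp
  | 1 => simp
  | (n+2) =>
    have h : (n+2).choose 2 = (n+1).choose 1 + (n+1).choose 2 := Nat.choose_succ_succ _ _
    have h2 : (n+1).choose 1 = n + 1 := Nat.choose_one_right _
    omega

section helpers

variable {V : Type*} [Fintype V] [DecidableEq V] (G : SimpleGraph V) [DecidableRel G.Adj]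

private lemma swap_sum (s t : Finset V) :
    ∑ w ∈ s, (G.neighborFinset w ∩ t).card = ∑ v ∈ t, (G.neighborFinset v ∩ s).card := by
  have key : ∀ (s t : Finset V) (w : V), (G.neighborFinset w ∩ t).card
      = ∑ v ∈ t, (if G.Adj w v then 1 else 0) := by
    intro s t w
    rw [← Finset.card_filter]
    congr 1
    ext x
    simp [SimpleGraph.mem_neighborFinset, and_comm]
  calc ∑ w ∈ s, (G.neighborFinset w ∩ t).card
      = ∑ w ∈ s, ∑ v ∈ t, (if G.Adj w v then 1 else 0) := by
        exact Finset.sum_congr rfl fun w _ => key s t w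
    _ = ∑ v ∈ t, ∑ w ∈ s, (if G.Adj w v then 1 else 0) := Finset.sum_comm
    _ = ∑ v ∈ t, ∑ w ∈ s, (if G.Adj v w then 1 else 0) := by
        apply Finset.sum_congr rfl; intro v _; apply Finset.sum_congr rfl; intro w _
        simp [G.adj_comm]
    _ = ∑ v ∈ t, (G.neighborFinset v ∩ s).card := by
        exact Finset.sum_congr rfl fun v _ => (key t s v).symm

private lemma core_s9 (A B C : Finset V)
    (hAB : Disjoint A B) (hAC : Disjoint A C) (hBC : Disjoint B C)
    (hcn : ∀ x y w z : V, x ≠ y → G.Adj w x → G.Adj w y → G.Adj z x → G.Adj z y → w = z)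
    (hdegB : ∀ v ∈ B, 4 ≤ G.degree v)
    (hnbr : ∀ v ∈ B, G.neighborFinset v ⊆ A ∪ B ∪ C)
    (heAB : 4 ≤ ∑ w ∈ A, (G.neighborFinset w ∩ B).card)
    (heCB : 4 ≤ ∑ w ∈ C, (G.neighborFinset w ∩ B).card) :
    9 ≤ A.card + B.card + C.card := by
  by_contra hlt
  push_neg at hlt
  -- Kővári–Sós–Turán-type bound from C4-freeness
  have K : ∀ T : Finset V, ∑ w ∈ T, ((G.neighborFinset w ∩ B).card.choose 2)
      ≤ B.card.choose 2 := by
    intro T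
    have hdisj : ∀ w ∈ T, ∀ w' ∈ T, w ≠ w' →
        Disjoint ((G.neighborFinset w ∩ B).powersetCard 2)
          ((G.neighborFinset w' ∩ B).powersetCard 2) := by
      intro w _ w' _ hne
      rw [Finset.disjoint_left]
      intro p hp hp'
      rw [Finset.mem_powersetCard] at hp hp'
      obtain ⟨x, y, hxy, rfl⟩ := Finset.card_eq_two.mp hp.2
      have hx : x ∈ G.neighborFinset w ∩ B := hp.1 (by simp)
      have hy : y ∈ G.neighborFinset w ∩ B := hp.1 (by simp)
      have hx' : x ∈ G.neighborFinset w' ∩ B := hp'.1 (by simp)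
      have hy' : y ∈ G.neighborFinset w' ∩ B := hp'.1 (by simp)
      simp only [Finset.mem_inter, SimpleGraph.mem_neighborFinset] at hx hy hx' hy'
      exact hne (hcn x y w w' hxy hx.1 hy.1 hx'.1 hy'.1)
    calc ∑ w ∈ T, ((G.neighborFinset w ∩ B).card.choose 2)
        = ∑ w ∈ T, ((G.neighborFinset w ∩ B).powersetCard 2).card := by
          exact Finset.sum_congr rfl fun w _ => (Finset.card_powersetCard 2 _).symm
      _ = (T.biUnion fun w => (G.neighborFinset w ∩ B).powersetCard 2).card :=
          (Finset.card_biUnion hdisj).symm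
      _ ≤ (B.powersetCard 2).card := by
          apply Finset.card_le_card
          intro p hp
          simp only [Finset.mem_biUnion, Finset.mem_powersetCard] at hp ⊢
          obtain ⟨w, _, hsub, hc⟩ := hp
          exact ⟨hsub.trans Finset.inter_subset_right, hc⟩
      _ = B.card.choose 2 := Finset.card_powersetCard 2 B
  have hBne : B.Nonempty := by
    rcases Finset.eq_empty_or_nonempty B with h | h
    · simp [h] at heAB
    · exact h
  have hAne : A.Nonempty := by
    rcases Finset.eq_empty_or_nonempty A with h | h
    · simp [h] at heAB
    · exact h
  have hCne : C.Nonempty := by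
    rcases Finset.eq_empty_or_nonempty C with h | h
    · simp [h] at heCB
    · exact h
  have hd_le : ∀ w : V, (G.neighborFinset w ∩ B).card
      ≤ 1 + ((G.neighborFinset w ∩ B).card).choose 2 := fun w => nat_le_one_add_choose _
  by_cases hb : B.card ≤ 2
  · -- small middle level: use only the two cuts
    have h1 : 8 ≤ ∑ w ∈ A ∪ C, (G.neighborFinset w ∩ B).card := by
      rw [Finset.sum_union hAC]; omega
    have h2 : ∑ w ∈ A ∪ C, (G.neighborFinset w ∩ B).card
        ≤ (A ∪ C).card + B.card.choose 2 := by
      calc ∑ w ∈ A ∪ C, (G.neighborFinset w ∩ B).card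
          ≤ ∑ w ∈ A ∪ C, (1 + ((G.neighborFinset w ∩ B).card).choose 2) :=
            Finset.sum_le_sum fun w _ => hd_le w
        _ = (A ∪ C).card + ∑ w ∈ A ∪ C, ((G.neighborFinset w ∩ B).card).choose 2 := by
            rw [Finset.sum_add_distrib, Finset.sum_const, smul_eq_mul, mul_one]
        _ ≤ (A ∪ C).card + B.card.choose 2 := by
            exact Nat.add_le_add_left (K _) _
    have hACcard : (A ∪ C).card = A.card + C.card := Finset.card_union_of_disjoint hAC
    have hBpos : 1 ≤ B.card := hBne.card_pos
    have hch : B.card.choose 2 + 1 ≤ B.card := by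
      interval_cases h : B.card <;> decide
    omega
  · push_neg at hb
    have hSdisj : Disjoint (A ∪ B) C := Finset.disjoint_union_left.mpr ⟨hAC, hBC⟩
    have hScard : (A ∪ B ∪ C).card = A.card + B.card + C.card := by
      rw [Finset.card_union_of_disjoint hSdisj, Finset.card_union_of_disjoint hAB]
    have hm1 : 4 * B.card ≤ ∑ v ∈ B, G.degree v := by
      calc 4 * B.card = ∑ _v ∈ B, 4 := by rw [Finset.sum_const, smul_eq_mul, mul_comm]
        _ ≤ ∑ v ∈ B, G.degree v := Finset.sum_le_sum hdegB
    have hm2 : ∑ v ∈ B, G.degree v = ∑ w ∈ A ∪ B ∪ C, (G.neighborFinset w ∩ B).card := by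
      rw [swap_sum]
      apply Finset.sum_congr rfl
      intro v hv
      rw [SimpleGraph.degree, Finset.inter_eq_left.mpr (hnbr v hv)]
    have hm3 : ∑ w ∈ A ∪ B ∪ C, (G.neighborFinset w ∩ B).card
        ≤ (A ∪ B ∪ C).card + B.card.choose 2 := by
      calc ∑ w ∈ A ∪ B ∪ C, (G.neighborFinset w ∩ B).card
          ≤ ∑ w ∈ A ∪ B ∪ C, (1 + ((G.neighborFinset w ∩ B).card).choose 2) :=
            Finset.sum_le_sum fun w _ => hd_le w
        _ = (A ∪ B ∪ C).card + ∑ w ∈ A ∪ B ∪ C, ((G.neighborFinset w ∩ B).card).choose 2 := by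
            rw [Finset.sum_add_distrib, Finset.sum_const, smul_eq_mul, mul_one]
        _ ≤ (A ∪ B ∪ C).card + B.card.choose 2 := Nat.add_le_add_left (K _) _
    have hA1 : 1 ≤ A.card := hAne.card_pos
    have hC1 : 1 ≤ C.card := hCne.card_pos
    have hb6 : B.card ≤ 6 := by omega
    have hfalse : 8 + B.card.choose 2 < 4 * B.card := by
      interval_cases h : B.card <;> decide
    omega

end helpers

theorem three_consecutive_levels_ge_nine {V : Type*} [Fintype V] (G : SimpleGraph V)
    (hconn : G.Connected) (hC4 : C4Free G) (hec : EdgeConnAtLeast G 4)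
    (u : V) (d : ℕ)
    (hdiam : ∀ v w : V, G.dist v w ≤ d) (hecc : ∃ v, G.dist u v = d)
    (n : ℕ → ℕ) (hn : ∀ i, n i = {v : V | G.dist u v = i}.ncard)
    (i : ℕ) (hi1 : 1 ≤ i) (hi2 : i + 1 ≤ d) :
    9 ≤ n (i - 1) + n i + n (i + 1) := by
  classical
  obtain ⟨v', hv'⟩ := hecc
  obtain ⟨j, rfl⟩ : ∃ j, i = j + 1 := ⟨i - 1, by omega⟩
  have hij : j + 1 - 1 = j := by omega
  rw [hij]
  set L : ℕ → Finset V := fun k => Finset.univ.filter (fun v => G.dist u v = k) with hLdef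
  have hmemL : ∀ (k : ℕ) (x : V), x ∈ L k ↔ G.dist u x = k := by
    intro k x; simp [hLdef]
  have hnL : ∀ k, n k = (L k).card := by
    intro k
    rw [hn]
    have he : {v : V | G.dist u v = k} = ↑(L k) := by
      ext x; simp [hmemL]
    rw [he, Set.ncard_coe_finset]
  rw [hnL, hnL, hnL]
  -- C4-free: two distinct vertices have at most one common neighbor
  have hcn : ∀ x y w z : V, x ≠ y → G.Adj w x → G.Adj w y → G.Adj z x → G.Adj z y → w = z := by
    intro x y w z hxy h1 h2 h3 h4
    by_contra hwz
    exact hC4 ⟨w, x, z, y, h1.ne, hwz, h2.ne, Ne.symm h3.ne, hxy, h4.ne,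
      h1, h3.symm, h4, h2.symm⟩
  have hd2 : 2 ≤ d := by omega
  have hv'u : v' ≠ u := by
    intro he
    rw [he, SimpleGraph.dist_self] at hv'
    omega
  -- minimum degree at least 4
  have hdeg : ∀ v : V, 4 ≤ G.degree v := by
    intro v
    by_contra hle
    push_neg at hle
    have hcard : (G.incidenceFinset v).card < 4 := by
      rwa [SimpleGraph.card_incidenceFinset_eq_degree]
    have hconn' := hec _ hcard
    have hw : ∃ w : V, w ≠ v := by
      by_cases h : v = u
      · exact ⟨v', by rw [h]; exact hv'u⟩
      · exact ⟨u, fun he => h he.symm⟩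
    obtain ⟨w, hwv⟩ := hw
    obtain ⟨p⟩ := hconn'.preconnected v w
    cases p with
    | nil => exact hwv rfl
    | cons h p =>
      rw [SimpleGraph.deleteEdges_adj] at h
      refine h.2 ?_
      apply Finset.mem_coe.mpr
      rw [SimpleGraph.mem_incidenceFinset]
      exact (G.mem_incidenceSet v _).mpr h.1
  -- at least 4 edges across each level cut
  have hcut : ∀ k, k < d → 4 ≤ ∑ w ∈ L (k+1), (G.neighborFinset w ∩ L k).card := by
    intro k hk
    by_contra hle
    push_neg at hle
    set es : Finset (Sym2 V) :=
      (L (k+1)).biUnion (fun w => (G.neighborFinset w ∩ L k).image (fun x => s(w, x))) with hes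
    have hescard : es.card < 4 := by
      calc es.card ≤ ∑ w ∈ L (k+1), ((G.neighborFinset w ∩ L k).image (fun x => s(w, x))).card :=
            Finset.card_biUnion_le
        _ ≤ ∑ w ∈ L (k+1), (G.neighborFinset w ∩ L k).card :=
            Finset.sum_le_sum fun w _ => Finset.card_image_le
        _ < 4 := hle
    have hconn' := hec es hescard
    have key : ∀ x y : V, (G.deleteEdges ↑es).Walk x y → G.dist u x ≤ k → G.dist u y ≤ k := by
      intro x y p
      induction p with
      | nil => exact id
      | @cons a b c h p ih =>
        intro hx
        apply ih
        rw [SimpleGraph.deleteEdges_adj] at h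
        have hab : G.dist a b = 1 := SimpleGraph.dist_eq_one_iff_adj.mpr h.1
        have htri : G.dist u b ≤ G.dist u a + G.dist a b := hconn.dist_triangle
        by_contra hz
        push_neg at hz
        have h1 : G.dist u b = k + 1 := by omega
        have h2 : G.dist u a = k := by omega
        refine h.2 ?_
        apply Finset.mem_coe.mpr
        rw [hes]
        apply Finset.mem_biUnion.mpr
        refine ⟨b, (hmemL _ _).mpr h1, ?_⟩
        apply Finset.mem_image.mpr
        refine ⟨a, ?_, Sym2.eq_swap⟩
        rw [Finset.mem_inter, SimpleGraph.mem_neighborFinset]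
        exact ⟨h.1.symm, (hmemL _ _).mpr h2⟩
    obtain ⟨p⟩ := hconn'.preconnected u v'
    have hfin := key u v' p (by simp [SimpleGraph.dist_self])
    omega
  -- assemble
  have hdisj : ∀ k l : ℕ, k ≠ l → Disjoint (L k) (L l) := by
    intro k l hkl
    rw [Finset.disjoint_left]
    intro x hx hx'
    rw [hmemL] at hx hx'
    omega
  have hnbr : ∀ v ∈ L (j+1), G.neighborFinset v ⊆ L j ∪ L (j+1) ∪ L (j+1+1) := by
    intro v hv x hx
    rw [SimpleGraph.mem_neighborFinset] at hx
    rw [hmemL] at hv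
    have hvx : G.dist v x = 1 := SimpleGraph.dist_eq_one_iff_adj.mpr hx
    have hxv : G.dist x v = 1 := SimpleGraph.dist_eq_one_iff_adj.mpr hx.symm
    have t1 : G.dist u x ≤ G.dist u v + G.dist v x := hconn.dist_triangle
    have t2 : G.dist u v ≤ G.dist u x + G.dist x v := hconn.dist_triangle
    simp only [Finset.mem_union, hmemL]
    omega
  have heCB : 4 ≤ ∑ w ∈ L (j+1+1), (G.neighborFinset w ∩ L (j+1)).card :=
    hcut (j+1) (by omega)
  have heAB : 4 ≤ ∑ w ∈ L j, (G.neighborFinset w ∩ L (j+1)).card := by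
    rw [swap_sum]
    exact hcut j (by omega)
  exact core_s9 G (L j) (L (j+1)) (L (j+1+1))
    (hdisj _ _ (by omega)) (hdisj _ _ (by omega)) (hdisj _ _ (by omega))
    hcn (fun v _ => hdeg v) hnbr heAB heCB
end

section
/- Let G be a connected C4-free graph with edge-connectivity at least 4, let u be a vertex of maximum eccentricity d ≥ 1, and let n_i denote the number of vertices at distance i from u. Then n_{d-1} + n_d ≥ 5. -/
private lemma cross_edge {V : Type*} (H : SimpleGraph V) (P : V → Prop)
    {x y : V} (p : H.Walk x y) : ¬ P x → P y →
    ∃ v w, H.Adj v w ∧ ¬ P v ∧ P w := by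
  induction p with
  | nil => intro hx hy; exact absurd hy hx
  | @cons x z y h p ih =>
    intro hx hy
    by_cases hz : P z
    · exact ⟨_, _, h, hx, hz⟩
    · exact ih hz hy

theorem last_two_levels_ge_five {V : Type*} [Fintype V] (G : SimpleGraph V)
    (hconn : G.Connected) (hC4 : C4Free G) (hec : EdgeConnAtLeast G 4)
    (u : V) (d : ℕ) (hd : 1 ≤ d)
    (hdiam : ∀ v w : V, G.dist v w ≤ d) (hecc : ∃ v, G.dist u v = d)
    (n : ℕ → ℕ) (hn : ∀ i, n i = {v : V | G.dist u v = i}.ncard) :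
    5 ≤ n (d - 1) + n d := by
  classical
  by_contra hlt
  push_neg at hlt
  set A' : Finset V := Finset.univ.filter (fun v => G.dist u v = d - 1) with hA'
  set B' : Finset V := Finset.univ.filter (fun v => G.dist u v = d) with hB'
  have hAmem : ∀ a, a ∈ A' ↔ G.dist u a = d - 1 := by
    intro a; simp [hA']
  have hBmem : ∀ b, b ∈ B' ↔ G.dist u b = d := by
    intro b; simp [hB']
  have hcardA : n (d - 1) = A'.card := by
    rw [hn, ← Set.ncard_coe_finset]; congr 1; ext v; simp [hA']
  have hcardB : n d = B'.card := by
    rw [hn, ← Set.ncard_coe_finset]; congr 1; ext v; simp [hB']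
  have hsum : A'.card + B'.card ≤ 4 := by omega
  -- adjacency from B goes to A
  have hstep : ∀ v w, v ∈ B' → G.Adj v w → w ∉ B' → w ∈ A' := by
    intro v w hv hadj hw
    rw [hBmem] at hv hw
    rw [hAmem]
    have h1 : G.dist u w ≤ d := hdiam u w
    have h2 : G.dist u v ≤ G.dist u w + G.dist w v :=
      hconn.dist_triangle
    have h3 : G.dist w v ≤ 1 := by
      have := SimpleGraph.dist_le hadj.symm.toWalk
      simpa using this
    omega
  have hAB : ∀ a ∈ A', ∀ b ∈ B', a ≠ b := by
    intro a ha b hb h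
    rw [hAmem] at ha; rw [hBmem] at hb
    subst h; omega
  -- the cut
  set s : Finset (Sym2 V) :=
    Finset.univ.filter (fun e => ∃ a ∈ A', ∃ b ∈ B', G.Adj a b ∧ e = s(a, b)) with hsdef
  have hsmem : ∀ e, e ∈ s ↔ ∃ a ∈ A', ∃ b ∈ B', G.Adj a b ∧ e = s(a, b) := by
    intro e; simp [hsdef]
  obtain ⟨v0, hv0⟩ := hecc
  have hv0B : v0 ∈ B' := (hBmem v0).2 hv0
  have huB : u ∉ B' := by
    rw [hBmem, SimpleGraph.dist_self]; omega
  have hs4 : 4 ≤ s.card := by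
    by_contra h
    push_neg at h
    have hc := hec s (by omega)
    obtain ⟨p⟩ := hc.preconnected u v0
    obtain ⟨v, w, hadj, hv, hw⟩ := cross_edge _ (· ∈ B') p huB hv0B
    rw [SimpleGraph.deleteEdges_adj] at hadj
    obtain ⟨hadj, hns⟩ := hadj
    have hvA : v ∈ A' := hstep w v hw hadj.symm hv
    exact hns (by rw [Finset.mem_coe, hsmem]; exact ⟨v, hvA, w, hw, hadj, rfl⟩)
  have hsub : s ⊆ (A' ×ˢ B').image (fun p => s(p.1, p.2)) := by
    intro e he
    rw [hsmem] at he
    obtain ⟨a, ha, b, hb, _, rfl⟩ := he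
    exact Finset.mem_image.2 ⟨(a, b), Finset.mem_product.2 ⟨ha, hb⟩, rfl⟩
  have himg : ((A' ×ˢ B').image (fun p => s(p.1, p.2))).card ≤ A'.card * B'.card := by
    calc ((A' ×ˢ B').image (fun p => s(p.1, p.2))).card ≤ (A' ×ˢ B').card :=
          Finset.card_image_le
      _ = A'.card * B'.card := Finset.card_product _ _
  have hprod : 4 ≤ A'.card * B'.card :=
    le_trans hs4 (le_trans (Finset.card_le_card hsub) himg)
  have hA2 : A'.card = 2 := by
    have h1 : A'.card ≤ 4 := by omega
    have h2 : B'.card ≤ 4 := by omega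
    interval_cases h : A'.card <;> interval_cases h2 : B'.card <;> omega
  have hB2 : B'.card = 2 := by
    have h2 : B'.card ≤ 4 := by omega
    interval_cases h2 : B'.card <;> omega
  have hseq : s = (A' ×ˢ B').image (fun p => s(p.1, p.2)) :=
    Finset.eq_of_subset_of_card_le hsub (by
      calc ((A' ×ˢ B').image (fun p => s(p.1, p.2))).card ≤ A'.card * B'.card := himg
        _ ≤ 4 := by rw [hA2, hB2]
        _ ≤ s.card := hs4)
  have hadjall : ∀ a ∈ A', ∀ b ∈ B', G.Adj a b := by
    intro a ha b hb
    have : s(a, b) ∈ s := by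
      rw [hseq]
      exact Finset.mem_image.2 ⟨(a, b), Finset.mem_product.2 ⟨ha, hb⟩, rfl⟩
    rw [hsmem] at this
    obtain ⟨a', ha', b', hb', hadj, heq⟩ := this
    rw [Sym2.eq_iff] at heq
    rcases heq with ⟨rfl, rfl⟩ | ⟨rfl, rfl⟩
    · exact hadj
    · exact absurd rfl (hAB _ ha' _ hb)
  obtain ⟨a1, a2, ha12, hAeq⟩ := Finset.card_eq_two.1 hA2
  obtain ⟨b1, b2, hb12, hBeq⟩ := Finset.card_eq_two.1 hB2
  have ha1 : a1 ∈ A' := by rw [hAeq]; simp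
  have ha2 : a2 ∈ A' := by rw [hAeq]; simp
  have hb1 : b1 ∈ B' := by rw [hBeq]; simp
  have hb2 : b2 ∈ B' := by rw [hBeq]; simp
  exact hC4 ⟨a1, b1, a2, b2,
    hAB _ ha1 _ hb1, ha12, hAB _ ha1 _ hb2,
    (hAB _ ha2 _ hb1).symm, hb12, hAB _ ha2 _ hb2,
    hadjall _ ha1 _ hb1, (hadjall _ ha2 _ hb1).symm,
    hadjall _ ha2 _ hb2, (hadjall _ ha1 _ hb2).symm⟩
end

section
/- Every connected C4-free graph of order n, minimum degree δ ≥ 2, and diameter d satisfies d ≤ 5n / (δ² - 2⌊δ/2⌋ + 1). -/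
section aux
variable {V : Type*} {G : SimpleGraph V}

lemma dist_getVert_le (hconn : G.Connected) {u w : V} (p : G.Walk u w) (i : ℕ) :
    G.dist u (p.getVert i) ≤ i := by
  induction p generalizing i with
  | nil => simp [SimpleGraph.Walk.getVert_of_length_le _
      (by simp : (SimpleGraph.Walk.nil : G.Walk _ _).length ≤ i), SimpleGraph.dist_self]
  | @cons a b c h q ih =>
    cases i with
    | zero => simp [SimpleGraph.Walk.getVert_zero, SimpleGraph.dist_self]
    | succ i =>
      rw [SimpleGraph.Walk.getVert_cons_succ]
      calc G.dist a (q.getVert i) ≤ G.dist a b + G.dist b (q.getVert i) :=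
            hconn.dist_triangle
        _ ≤ 1 + i := by
            have h1 : G.dist a b ≤ 1 := by
              simpa using SimpleGraph.dist_le (SimpleGraph.Walk.cons h SimpleGraph.Walk.nil)
            exact Nat.add_le_add h1 (ih i)
        _ = i + 1 := by omega

lemma dist_getVert_right {u w : V} (p : G.Walk u w) (i : ℕ) :
    G.dist (p.getVert i) w ≤ p.length - i := by
  induction p generalizing i with
  | nil => simp [SimpleGraph.Walk.getVert_of_length_le _
      (by simp : (SimpleGraph.Walk.nil : G.Walk _ _).length ≤ i), SimpleGraph.dist_self]
  | @cons a b c h q ih =>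
    cases i with
    | zero =>
      simpa using SimpleGraph.dist_le (SimpleGraph.Walk.cons h q)
    | succ i =>
      rw [SimpleGraph.Walk.getVert_cons_succ]
      have := ih i
      simp only [SimpleGraph.Walk.length_cons]
      omega

end aux

noncomputable def ball2 {V : Type*} [Fintype V] (G : SimpleGraph V) (v : V) : Finset V :=
  Finset.univ.filter (fun x => G.dist v x ≤ 2)

lemma mem_ball2 {V : Type*} [Fintype V] {G : SimpleGraph V} {v x : V} :
    x ∈ ball2 G v ↔ G.dist v x ≤ 2 := by
  rw [ball2, Finset.mem_filter]; simp

lemma ball2_disjoint {V : Type*} [Fintype V] {G : SimpleGraph V} (hconn : G.Connected)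
    {a b : V} (h : 5 ≤ G.dist a b) : Disjoint (ball2 G a) (ball2 G b) := by
  rw [Finset.disjoint_left]
  intro x hxa hxb
  rw [mem_ball2] at hxa hxb
  have : G.dist a b ≤ G.dist a x + G.dist x b := hconn.dist_triangle
  rw [SimpleGraph.dist_comm (u := x) (v := b)] at this
  omega

open SimpleGraph Finset in
lemma ball2_card {V : Type*} [Fintype V] [DecidableEq V] {G : SimpleGraph V}
    [DecidableRel G.Adj] (hC4 : C4Free G) {δ : ℕ} (hδ2 : 2 ≤ δ)
    (hdeg : ∀ u : V, δ ≤ G.degree u) (v : V) :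
    δ * δ + 1 ≤ (ball2 G v).card + 2 * (δ / 2) := by
  set A := G.neighborFinset v with hA
  have hvA : v ∉ A := by simp [hA]
  have hdegA : ∀ u : V, δ ≤ (G.neighborFinset u).card := fun u => hdeg u
  obtain ⟨c, hac⟩ : ∃ c, A.card = δ + c := ⟨A.card - δ, by have := hdegA v; rw [← hA] at this; omega⟩
  -- each neighbor has at most one neighbor inside A
  have he1 : ∀ u ∈ A, (A.filter (G.Adj u)).card ≤ 1 := by
    intro u hu
    by_contra hcon
    obtain ⟨x, y, hx, hy, hxy⟩ := Finset.one_lt_card_iff.mp (show 1 < (A.filter (G.Adj u)).card by omega)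
    rw [Finset.mem_filter] at hx hy
    have hvx : G.Adj v x := by
      have := hx.1; rw [hA, SimpleGraph.mem_neighborFinset] at this; exact this
    have hvy : G.Adj v y := by
      have := hy.1; rw [hA, SimpleGraph.mem_neighborFinset] at this; exact this
    have hvu : G.Adj v u := (SimpleGraph.mem_neighborFinset _ _ _).mp hu
    exact hC4 ⟨v, x, u, y, hvx.ne, hvu.ne, hvy.ne, hx.2.ne', hxy, hy.2.ne,
      hvx, hx.2.symm, hy.2, hvy.symm⟩
  -- lower bound on |F u|
  have hFcard : ∀ u ∈ A,
      δ ≤ (G.neighborFinset u \ insert v A).card + 1 + (A.filter (G.Adj u)).card := by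
    intro u hu
    have h1 : (G.neighborFinset u \ insert v A).card + (G.neighborFinset u ∩ insert v A).card
        = (G.neighborFinset u).card := Finset.card_sdiff_add_card_inter _ _
    have h2 : G.neighborFinset u ∩ insert v A ⊆ insert v (A.filter (G.Adj u)) := by
      intro x hx
      rw [Finset.mem_inter] at hx
      rcases Finset.mem_insert.mp hx.2 with h | h
      · exact h ▸ Finset.mem_insert_self _ _
      · exact Finset.mem_insert_of_mem
          (Finset.mem_filter.mpr ⟨h, (SimpleGraph.mem_neighborFinset _ _ _).mp hx.1⟩)
    have h3 := Finset.card_le_card h2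
    have h4 : (insert v (A.filter (G.Adj u))).card ≤ (A.filter (G.Adj u)).card + 1 :=
      Finset.card_insert_le _ _
    have h5 := hdegA u
    omega
  -- the F u are pairwise disjoint
  have hFdisj : ∀ u1 ∈ A, ∀ u2 ∈ A, u1 ≠ u2 →
      Disjoint (G.neighborFinset u1 \ insert v A) (G.neighborFinset u2 \ insert v A) := by
    intro u1 h1 u2 h2 h12
    rw [Finset.disjoint_left]
    intro x hx1 hx2
    rw [Finset.mem_sdiff] at hx1 hx2
    have hu1x : G.Adj u1 x := (SimpleGraph.mem_neighborFinset _ _ _).mp hx1.1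
    have hu2x : G.Adj u2 x := (SimpleGraph.mem_neighborFinset _ _ _).mp hx2.1
    have hxv : x ≠ v := fun h => hx1.2 (h ▸ Finset.mem_insert_self _ _)
    have hvu1 : G.Adj v u1 := (SimpleGraph.mem_neighborFinset _ _ _).mp h1
    have hvu2 : G.Adj v u2 := (SimpleGraph.mem_neighborFinset _ _ _).mp h2
    exact hC4 ⟨v, u1, x, u2, hvu1.ne, hxv.symm, hvu2.ne, hu1x.ne, h12, hu2x.ne',
      hvu1, hu1x, hu2x.symm, hvu2.symm⟩
  -- the sum of e over A is even
  have hEeven : Even (∑ u ∈ A, (A.filter (G.Adj u)).card) := by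
    have hz : ((∑ u ∈ A, (A.filter (G.Adj u)).card : ℕ) : ZMod 2) = 0 := by
      push_cast
      have hstep : ∀ u ∈ A, (((A.filter (G.Adj u)).card : ℕ) : ZMod 2)
          = ∑ w ∈ A, (if G.Adj u w then (1 : ZMod 2) else 0) := by
        intro u hu
        simp only [Finset.card_filter]
        push_cast
        rfl
      calc ∑ u ∈ A, (((A.filter (G.Adj u)).card : ℕ) : ZMod 2)
          = ∑ u ∈ A, ∑ w ∈ A, (if G.Adj u w then (1 : ZMod 2) else 0) :=
            Finset.sum_congr rfl hstep
        _ = ∑ p ∈ A ×ˢ A, (if G.Adj p.1 p.2 then (1 : ZMod 2) else 0) := by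
            rw [Finset.sum_product]
        _ = 0 := by
            refine Finset.sum_involution (fun p _ => (p.2, p.1)) ?_ ?_ ?_ ?_
            · intro p hp
              by_cases h : G.Adj p.1 p.2
              · have h2 : G.Adj p.2 p.1 := h.symm
                simp only [if_pos h, if_pos h2]
                decide
              · have h2 : ¬ G.Adj p.2 p.1 := fun hh => h hh.symm
                simp only [if_neg h, if_neg h2]
                decide
            · intro p hp hne
              have hadj : G.Adj p.1 p.2 := by
                by_contra h; simp [h] at hne
              intro hcon
              have : p.2 = p.1 := congrArg Prod.fst hcon
              exact hadj.ne this.symm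
            · intro p hp
              rw [Finset.mem_product] at hp ⊢
              exact ⟨hp.2, hp.1⟩
            · intro p hp; rfl
    exact even_iff_two_dvd.mpr ((ZMod.natCast_eq_zero_iff _ 2).mp hz)
  have hEle : ∑ u ∈ A, (A.filter (G.Adj u)).card ≤ A.card := by
    calc ∑ u ∈ A, (A.filter (G.Adj u)).card ≤ ∑ _u ∈ A, 1 := Finset.sum_le_sum he1
      _ = A.card := by simp
  have hE2 : ∑ u ∈ A, (A.filter (G.Adj u)).card ≤ 2 * (A.card / 2) := by
    obtain ⟨m, hm⟩ := hEeven
    omega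
  -- sum bound
  have hsum : δ * δ + 2 * c ≤ (∑ u ∈ A, (G.neighborFinset u \ insert v A).card) + A.card
      + ∑ u ∈ A, (A.filter (G.Adj u)).card := by
    have h1 : A.card * δ ≤ (∑ u ∈ A, (G.neighborFinset u \ insert v A).card) + A.card
        + ∑ u ∈ A, (A.filter (G.Adj u)).card := by
      calc A.card * δ = ∑ _u ∈ A, δ := by rw [Finset.sum_const, smul_eq_mul, mul_comm]
        _ ≤ ∑ u ∈ A, ((G.neighborFinset u \ insert v A).card + 1 + (A.filter (G.Adj u)).card) :=
            Finset.sum_le_sum hFcard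
        _ = (∑ u ∈ A, (G.neighborFinset u \ insert v A).card) + A.card
            + ∑ u ∈ A, (A.filter (G.Adj u)).card := by
            rw [Finset.sum_add_distrib, Finset.sum_add_distrib]
            simp [add_assoc, add_comm, add_left_comm]
    have h2 : A.card * δ = δ * δ + c * δ := by rw [hac]; ring
    have h3 : 2 * c ≤ c * δ := by
      calc 2 * c = c * 2 := by ring
        _ ≤ c * δ := Nat.mul_le_mul_left c hδ2
    omega
  -- assemble the set T
  have hTsub : insert v A ∪ A.biUnion (fun u => G.neighborFinset u \ insert v A)
      ⊆ ball2 G v := by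
    intro x hx
    rw [mem_ball2]
    rcases Finset.mem_union.mp hx with h | h
    · rcases Finset.mem_insert.mp h with h | h
      · subst h; simp [SimpleGraph.dist_self]
      · have hvx : G.Adj v x := (SimpleGraph.mem_neighborFinset _ _ _).mp h
        have := SimpleGraph.dist_le (SimpleGraph.Walk.cons hvx SimpleGraph.Walk.nil)
        simp only [SimpleGraph.Walk.length_cons, SimpleGraph.Walk.length_nil] at this
        omega
    · obtain ⟨u, hu, hxF⟩ := Finset.mem_biUnion.mp h
      rw [Finset.mem_sdiff] at hxF
      have hux : G.Adj u x := (SimpleGraph.mem_neighborFinset _ _ _).mp hxF.1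
      have hvu : G.Adj v u := (SimpleGraph.mem_neighborFinset _ _ _).mp hu
      have := SimpleGraph.dist_le
        (SimpleGraph.Walk.cons hvu (SimpleGraph.Walk.cons hux SimpleGraph.Walk.nil))
      simp only [SimpleGraph.Walk.length_cons, SimpleGraph.Walk.length_nil] at this
      omega
  have hdisjT : Disjoint (insert v A)
      (A.biUnion (fun u => G.neighborFinset u \ insert v A)) := by
    rw [Finset.disjoint_right]
    intro x hx hx2
    obtain ⟨u, hu, hxF⟩ := Finset.mem_biUnion.mp hx
    rw [Finset.mem_sdiff] at hxF
    exact hxF.2 hx2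
  have hTcard : (insert v A ∪ A.biUnion (fun u => G.neighborFinset u \ insert v A)).card
      = 1 + A.card + ∑ u ∈ A, (G.neighborFinset u \ insert v A).card := by
    rw [Finset.card_union_of_disjoint hdisjT, Finset.card_insert_of_notMem hvA,
      Finset.card_biUnion hFdisj]
    omega
  have hball := Finset.card_le_card hTsub
  rw [hTcard] at hball
  have hdiv : (δ + c) / 2 ≤ δ / 2 + c := by omega
  rw [hac] at hE2
  omega


theorem erdos_pach_pollack_tuza {V : Type*} [Fintype V] (G : SimpleGraph V)
    (hconn : G.Connected) (hC4 : C4Free G)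
    (n d δ : ℕ) (hδ2 : 2 ≤ δ)
    (hδ : ∀ v : V, δ ≤ (G.neighborSet v).ncard)
    (hn : n = Fintype.card V) (hd : d = G.diam) :
    (d : ℝ) ≤ 5 * n / ((δ : ℝ) ^ 2 - 2 * ↑(δ / 2) + 1) := by
  classical
  subst hn hd
  have hne : Nonempty V := hconn.nonempty
  have hdeg : ∀ u : V, δ ≤ G.degree u := by
    intro u
    have h1 := hδ u
    have h2 : (G.neighborSet u).ncard = G.degree u := by
      rw [SimpleGraph.degree, SimpleGraph.neighborFinset_def, Set.ncard_eq_toFinset_card']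
    omega
  obtain ⟨u, w, huw⟩ := SimpleGraph.exists_dist_eq_diam (G := G)
  obtain ⟨p, hp⟩ := hconn.exists_walk_length_eq_dist u w
  set k := G.diam / 5 with hk
  have hdist : ∀ i j : ℕ, i < j → j ≤ k → 5 ≤ G.dist (p.getVert (5*i)) (p.getVert (5*j)) := by
    intro i j hij hj
    have h1 : G.dist u (p.getVert (5*i)) ≤ 5*i := dist_getVert_le hconn p _
    have h2 : G.dist (p.getVert (5*j)) w ≤ p.length - 5*j := dist_getVert_right p _
    have h3 : G.diam ≤ G.dist u (p.getVert (5*i)) +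
        (G.dist (p.getVert (5*i)) (p.getVert (5*j)) + G.dist (p.getVert (5*j)) w) := by
      rw [← huw]
      calc G.dist u w ≤ G.dist u (p.getVert (5*j)) + G.dist (p.getVert (5*j)) w :=
            hconn.dist_triangle
        _ ≤ (G.dist u (p.getVert (5*i)) + G.dist (p.getVert (5*i)) (p.getVert (5*j)))
            + G.dist (p.getVert (5*j)) w :=
            Nat.add_le_add_right hconn.dist_triangle _
        _ = _ := by omega
    have h4 : p.length = G.diam := by rw [hp, huw]
    have h5 : 5 * j ≤ G.diam := by omega
    omega
  have hdisj : ∀ i ∈ Finset.range (k+1), ∀ j ∈ Finset.range (k+1), i ≠ j →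
      Disjoint (ball2 G (p.getVert (5*i))) (ball2 G (p.getVert (5*j))) := by
    intro i hi j hj hij
    rw [Finset.mem_range] at hi hj
    rcases lt_or_gt_of_ne hij with h | h
    · exact ball2_disjoint hconn (hdist i j h (by omega))
    · exact (ball2_disjoint hconn (hdist j i h (by omega))).symm
  have hcount : (k+1) * (δ*δ+1) ≤ Fintype.card V + (k+1) * (2*(δ/2)) := by
    have h1 : ((Finset.range (k+1)).biUnion (fun i => ball2 G (p.getVert (5*i)))).card
        = ∑ i ∈ Finset.range (k+1), (ball2 G (p.getVert (5*i))).card :=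
      Finset.card_biUnion hdisj
    have h2 : ((Finset.range (k+1)).biUnion (fun i => ball2 G (p.getVert (5*i)))).card
        ≤ Fintype.card V := Finset.card_le_univ _
    have h3 : ∀ i ∈ Finset.range (k+1),
        δ*δ+1 ≤ (ball2 G (p.getVert (5*i))).card + 2*(δ/2) :=
      fun i _ => ball2_card hC4 hδ2 hdeg _
    have h4 : (k+1) * (δ*δ+1) ≤
        (∑ i ∈ Finset.range (k+1), (ball2 G (p.getVert (5*i))).card) + (k+1) * (2*(δ/2)) := by
      calc (k+1) * (δ*δ+1) = ∑ _i ∈ Finset.range (k+1), (δ*δ+1) := by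
            rw [Finset.sum_const, smul_eq_mul, Finset.card_range]
        _ ≤ ∑ i ∈ Finset.range (k+1), ((ball2 G (p.getVert (5*i))).card + 2*(δ/2)) :=
            Finset.sum_le_sum h3
        _ = _ := by
            rw [Finset.sum_add_distrib, Finset.sum_const, smul_eq_mul, Finset.card_range]
    omega
  -- pass to the reals
  have hmm : δ ≤ δ * δ := Nat.le_mul_of_pos_left δ (by omega)
  have hcast : 2*((δ/2 : ℕ):ℝ) ≤ (δ:ℝ)*(δ:ℝ) := by
    have h : (2*(δ/2) : ℕ) ≤ δ*δ := by omega
    calc 2*((δ/2 : ℕ):ℝ) = ((2*(δ/2) : ℕ) : ℝ) := by push_cast; ring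
      _ ≤ ((δ*δ : ℕ) : ℝ) := by exact_mod_cast h
      _ = (δ:ℝ)*(δ:ℝ) := by push_cast; ring
  have hDpos : 0 < (δ:ℝ)^2 - 2*(↑(δ/2) : ℝ) + 1 := by nlinarith [hcast]
  rw [le_div_iff₀ hDpos]
  have hc : ((k:ℝ)+1) * ((δ:ℝ)^2 - 2*(↑(δ/2) : ℝ) + 1) ≤ (Fintype.card V : ℝ) := by
    have := hcount
    have hcast2 : (((k+1) * (δ*δ+1) : ℕ) : ℝ) ≤ ((Fintype.card V + (k+1) * (2*(δ/2)) : ℕ) : ℝ) :=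
      by exact_mod_cast this
    push_cast at hcast2
    nlinarith [hcast2]
  have hdle : (G.diam : ℝ) ≤ 5*((k:ℝ)+1) := by
    have : G.diam ≤ 5*k+4 := by omega
    have : (G.diam : ℝ) ≤ ((5*k+4 : ℕ) : ℝ) := by exact_mod_cast this
    push_cast at this
    linarith
  calc (G.diam : ℝ) * ((δ:ℝ)^2 - 2*(↑(δ/2) : ℝ) + 1)
      ≤ (5*((k:ℝ)+1)) * ((δ:ℝ)^2 - 2*(↑(δ/2) : ℝ) + 1) :=
        mul_le_mul_of_nonneg_right hdle hDpos.le
    _ = 5*(((k:ℝ)+1) * ((δ:ℝ)^2 - 2*(↑(δ/2) : ℝ) + 1)) := by ring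
    _ ≤ 5*(Fintype.card V : ℝ) := by linarith [hc]
end

section
/- In a C4-free graph of minimum degree δ ≥ 2, for every vertex v there are at least δ² - 2⌊δ/2⌋ + 1 vertices at distance at most 2 from v. -/
/-!
Fix a set `N` of `δ` neighbours of `v`. Since `G` has no 4-cycle, two distinct vertices have
at most one common neighbour. Hence every `u ∈ N` has at most one neighbour in `N`, and the
neighbours of distinct `u ∈ N` outside `{v} ∪ N` are distinct, so the ball of radius two
contains at least `1 + δ + ∑ u ∈ N, (δ - 1 - e u)` vertices, where `e u ≤ 1` counts the
neighbours of `u` in `N`. By the handshake lemma for the graph induced on `N`,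
`∑ u ∈ N, e u` is even, so it is at most `2 * (δ / 2)`.
-/

open Finset

namespace SimpleGraph

variable {V : Type*} {G : SimpleGraph V}

lemma edist_le_two_iff {u v : V} :
    G.edist u v ≤ 2 ↔ u = v ∨ G.Adj u v ∨ (G.commonNeighbors u v).Nonempty := by
  rw [← not_lt, two_lt_edist_iff, ← Set.not_nonempty_iff_eq_empty]
  tauto

lemma setOf_edist_le_two_eq [DecidableEq V] [G.LocallyFinite] (v : V) :
    {w | G.edist v w ≤ 2} =
      ↑(insert v
        (G.neighborFinset v ∪ (G.neighborFinset v).biUnion fun u ↦ G.neighborFinset u)) := by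
  ext w
  simp only [Set.mem_ofPred_eq, edist_le_two_iff, coe_insert, coe_union, coe_biUnion,
    mem_coe, mem_neighborFinset, Set.mem_insert_iff, Set.mem_union, Set.mem_iUnion,
    Set.Nonempty, mem_commonNeighbors, exists_prop]
  grind [adj_comm]

lemma even_sum_card_filter_adj [DecidableEq V] [DecidableRel G.Adj] (s : Finset V) :
    Even (∑ u ∈ s, #{w ∈ s | G.Adj u w}) := by
  have hdeg (x : (s : Set V)) : (G.induce (s : Set V)).degree x = #{w ∈ s | G.Adj x w} := by
    rw [← card_neighborFinset_eq_degree]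
    refine card_bij (fun y _ ↦ y.1) ?_ ?_ ?_ <;> simp +contextual
  have h := (G.induce (s : Set V)).sum_degrees_eq_twice_card_edges
  simp only [hdeg] at h
  rw [← sum_coe_sort]
  exact ⟨_, h.trans (two_mul _)⟩

lemma degree_le_card_sdiff_add [DecidableEq V] [DecidableRel G.Adj] [G.LocallyFinite]
    (u v : V) (N : Finset V) :
    G.degree u ≤ #(G.neighborFinset u \ insert v N) + 1 + #{w ∈ N | G.Adj u w} := by
  rw [← card_neighborFinset_eq_degree]
  calc #(G.neighborFinset u)
      ≤ #((G.neighborFinset u \ insert v N ∪ {v}) ∪ {w ∈ N | G.Adj u w}) := by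
        refine card_le_card fun w hw ↦ ?_
        simp only [mem_neighborFinset] at hw
        simp only [union_singleton, insert_union, mem_insert, mem_union, mem_sdiff,
          mem_neighborFinset, hw, not_or, true_and, mem_filter, and_true]
        tauto
    _ ≤ _ := (card_union_le _ _).trans (by grw [card_union_le, card_singleton])

end SimpleGraph

open SimpleGraph

section C4Free

variable {V : Type*} {G : SimpleGraph V}

lemma C4Free.commonNeighbors_subsingleton (hG : C4Free G) {x y : V} (hxy : x ≠ y) :
    (G.commonNeighbors x y).Subsingleton := by
  rintro a ⟨hxa, hya⟩ b ⟨hxb, hyb⟩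
  by_contra hab
  exact hG ⟨x, a, y, b, hxa.ne, hxy, hxb.ne, hya.ne', hab, hyb.ne, hxa, hya.symm, hyb, hxb.symm⟩

lemma C4Free.card_filter_adj_le_one [DecidableRel G.Adj] (hG : C4Free G) {v : V} {N : Finset V}
    (hN : ∀ u ∈ N, G.Adj v u) {u : V} (hu : u ≠ v) :
    #{w ∈ N | G.Adj u w} ≤ 1 := by
  refine card_le_one.mpr fun a ha b hb ↦ hG.commonNeighbors_subsingleton hu ?_ ?_
  · exact ⟨(mem_filter.1 ha).2, hN a (mem_filter.1 ha).1⟩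
  · exact ⟨(mem_filter.1 hb).2, hN b (mem_filter.1 hb).1⟩

lemma C4Free.sum_card_filter_adj_le [DecidableEq V] [DecidableRel G.Adj] (hG : C4Free G) {v : V}
    {N : Finset V} (hN : ∀ u ∈ N, G.Adj v u) :
    ∑ u ∈ N, #{w ∈ N | G.Adj u w} ≤ 2 * (#N / 2) := by
  have hle : ∑ u ∈ N, #{w ∈ N | G.Adj u w} ≤ #N := by
    simpa using sum_le_sum fun u hu ↦ hG.card_filter_adj_le_one hN (hN u hu).ne'
  obtain ⟨k, hk⟩ := G.even_sum_card_filter_adj N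
  omega

lemma C4Free.pairwiseDisjoint_neighborFinset_sdiff [DecidableEq V] [G.LocallyFinite]
    (hG : C4Free G) {v : V} {N : Finset V} (hN : ∀ u ∈ N, G.Adj v u) :
    (N : Set V).PairwiseDisjoint fun u ↦ G.neighborFinset u \ insert v N := by
  intro u₁ hu₁ u₂ hu₂ hne
  refine disjoint_left.mpr fun w hw₁ hw₂ ↦ ?_
  simp only [mem_sdiff, mem_insert, mem_neighborFinset, not_or] at hw₁ hw₂
  exact hw₁.2.1 (hG.commonNeighbors_subsingleton hne ⟨hw₁.1, hw₂.1⟩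
    ⟨(hN u₁ hu₁).symm, (hN u₂ hu₂).symm⟩)

theorem C4Free.le_ncard_setOf_edist_le_two [DecidableEq V] [DecidableRel G.Adj] [G.LocallyFinite]
    (hG : C4Free G) {δ : ℕ} (hδ : ∀ u, δ ≤ G.degree u) (v : V) :
    δ ^ 2 - 2 * (δ / 2) + 1 ≤ {w | G.edist v w ≤ 2}.ncard := by
  obtain ⟨N, hNsub, hNcard⟩ :=
    exists_subset_card_eq ((hδ v).trans_eq (G.card_neighborFinset_eq_degree v).symm)
  have hN (u) (hu : u ∈ N) : G.Adj v u := (mem_neighborFinset ..).1 (hNsub hu)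
  set S := fun u ↦ G.neighborFinset u \ insert v N
  have hcard : #(insert v (N ∪ N.biUnion S)) = 1 + δ + ∑ u ∈ N, #(S u) := by
    have hvN : v ∉ N ∪ N.biUnion S := by
      simp only [mem_union, mem_biUnion, S, mem_sdiff, mem_insert_self, not_true, and_false,
        exists_false, or_false]
      exact fun hv ↦ G.irrefl (hN v hv)
    have hdisj : Disjoint N (N.biUnion S) := by
      simp only [disjoint_biUnion_right, S]
      exact fun u _ ↦ disjoint_sdiff.mono_left (subset_insert v N)
    rw [card_insert_of_notMem hvN, card_union_of_disjoint hdisj,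
      card_biUnion (hG.pairwiseDisjoint_neighborFinset_sdiff hN), hNcard, add_comm, add_assoc]
  have hsum : δ * δ ≤ ∑ u ∈ N, #(S u) + δ + 2 * (δ / 2) :=
    calc δ * δ = ∑ u ∈ N, δ := by simp [hNcard]
      _ ≤ ∑ u ∈ N, (#(S u) + 1 + #{w ∈ N | G.Adj u w}) :=
        sum_le_sum fun u _ ↦ (hδ u).trans (G.degree_le_card_sdiff_add u v N)
      _ = ∑ u ∈ N, #(S u) + δ + ∑ u ∈ N, #{w ∈ N | G.Adj u w} := by
        rw [sum_add_distrib, sum_add_distrib]; simp [hNcard]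
      _ ≤ _ := by grw [hG.sum_card_filter_adj_le hN, hNcard]
  have hsub : insert v (N ∪ N.biUnion S) ⊆
      insert v (G.neighborFinset v ∪ (G.neighborFinset v).biUnion fun u ↦ G.neighborFinset u) :=
    insert_subset_insert _ <| union_subset_union hNsub <|
      (biUnion_mono fun _ _ ↦ sdiff_subset).trans (biUnion_subset_biUnion_of_subset_left _ hNsub)
  rw [setOf_edist_le_two_eq, Set.ncard_coe_finset, sq]
  have := card_le_card hsub
  omega

end C4Free

theorem ball_two_lower_bound {V : Type*} (G : SimpleGraph V) (hC4 : C4Free G)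
    (δ : ℕ) (hδ2 : 2 ≤ δ) (hδ : ∀ v : V, δ ≤ (G.neighborSet v).ncard) (v : V) :
    δ ^ 2 - 2 * (δ / 2) + 1 ≤ {w : V | G.edist v w ≤ 2}.ncard := by
  classical
  -- an infinite neighbourhood would have `ncard` zero
  have hfin (u : V) : (G.neighborSet u).Finite := Set.finite_of_ncard_pos (by grind)
  let _ : G.LocallyFinite := fun u ↦ (hfin u).fintype
  refine hC4.le_ncard_setOf_edist_le_two (fun u ↦ ?_) v
  rw [← card_neighborSet_eq_degree, ← Nat.card_eq_fintype_card, Nat.card_coe_set_eq]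
  exact hδ u
end

section
/- In the Brown graph B(q) for an odd prime power q, every two non-adjacent vertices have exactly one common neighbor. -/
/-- The Brown graph on the projective plane over `F`: vertices are classes of
nonzero vectors of `F³`, adjacency is orthogonality of representatives. -/
def brown (F : Type*) [Field F] : SimpleGraph (Projectivization F (Fin 3 → F)) where
  Adj x y := x ≠ y ∧ ∑ i, x.rep i * y.rep i = 0
  symm := ⟨fun x y h => ⟨h.1.symm, by
    rw [← h.2]; exact Finset.sum_congr rfl fun i _ => mul_comm _ _⟩⟩
  loopless := ⟨fun x h => h.1 rfl⟩

/-- A vertex of the Brown graph is quadric if its representatives are self-orthogonal. -/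
def IsQuadric {F : Type*} [Field F] (x : Projectivization F (Fin 3 → F)) : Prop :=
  ∑ i, x.rep i * x.rep i = 0

/-!
Two distinct points `x, y` of the projective plane are both orthogonal to exactly one point,
the class of the cross product of their representatives: a vector `w` orthogonal to `a` and `b`
satisfies `(a ⨯₃ b) ⨯₃ w = (a ⬝ᵥ w) • b - (b ⬝ᵥ w) • a = 0`. So any two distinct vertices of
`B(q)` have at most one common neighbour, and `cross x y` is one unless it coincides with `x` or
`y`, which would make `x` and `y` adjacent.
-/

open scoped LinearAlgebra.Projectivization

namespace Projectivization

variable {F : Type*} [Field F]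

lemma orthogonal_iff_rep_dotProduct {m : Type*} [Fintype m] (x y : ℙ F (m → F)) :
    x.orthogonal y ↔ x.rep ⬝ᵥ y.rep = 0 := by
  conv_lhs => rw [← x.mk_rep, ← y.mk_rep]
  exact orthogonal_mk _ _

variable [DecidableEq F]

theorem eq_cross_of_orthogonal {x y z : ℙ F (Fin 3 → F)} (hxy : x ≠ y)
    (hxz : x.orthogonal z) (hyz : y.orthogonal z) : z = cross x y := by
  induction x with | h a ha =>
  induction y with | h b hb =>
  induction z with | h w hw =>
  rw [orthogonal_mk] at hxz hyz
  rw [cross_mk_of_ne ha hb hxy, eq_comm, mk_eq_mk_iff_crossProduct_eq_zero,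
    cross_cross_eq_smul_sub_smul, hxz, hyz, zero_smul, zero_smul, sub_zero]

end Projectivization

open Projectivization

lemma brown_adj_iff {F : Type*} [Field F] {x y : ℙ F (Fin 3 → F)} :
    (brown F).Adj x y ↔ x ≠ y ∧ x.orthogonal y := by
  rw [orthogonal_iff_rep_dotProduct]
  rfl

theorem brown_unique_common_neighbor_general (F : Type*) [Field F]
    (x y : Projectivization F (Fin 3 → F)) (hxy : x ≠ y)
    (hna : ¬ (brown F).Adj x y) :
    ∃! z, (brown F).Adj x z ∧ (brown F).Adj y z := by
  classical
  have hperp : ¬ x.orthogonal y := fun h => hna (brown_adj_iff.2 ⟨hxy, h⟩)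
  refine ⟨cross x y, ⟨brown_adj_iff.2 ⟨?_, orthogonal_cross_left hxy⟩,
    brown_adj_iff.2 ⟨?_, orthogonal_cross_right hxy⟩⟩, ?_⟩
  · exact fun h => hperp (h ▸ cross_orthogonal_right hxy)
  · exact fun h => hperp (orthogonal_comm.1 (h ▸ cross_orthogonal_left hxy))
  · rintro z ⟨hxz, hyz⟩
    exact eq_cross_of_orthogonal hxy (brown_adj_iff.1 hxz).2 (brown_adj_iff.1 hyz).2

theorem brown_unique_common_neighbor (F : Type*) [Field F] [Fintype F]
    (hodd : Odd (Fintype.card F))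
    (x y : Projectivization F (Fin 3 → F)) (hxy : x ≠ y)
    (hna : ¬ (brown F).Adj x y) :
    ∃! z, (brown F).Adj x z ∧ (brown F).Adj y z :=
  brown_unique_common_neighbor_general F x y hxy hna
end

section
/- The Brown graph B(q) for an odd prime power q is q-vertex-connected. -/
/-!
The Brown graph is the polarity graph of the projective plane `PG(2, F)` (`x ~ y` iff `x ∈ y⊥`),
and the argument works in any finite projective plane of order `n` with a symmetric incidence
`x ∈ y ↔ y ∈ x`; write `x⊥` (`polar x`) for the points incident with `x`. Let `S` be a set of
fewer than `n` points, `A` a union of components of the graph with `S` removed and `b` a remaining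
point outside `A`, and put `d x = #(x⊥ ∩ S)`.
A point of `A` and one outside `A ∪ S` can only share neighbours inside `S`, and two points of `b⊥`
meet only at `b ∉ S`; so `w ↦ a⊥ ∩ w⊥` injects `b⊥ \ S` into `a⊥ ∩ S` for every `a ∈ A`, giving
`d a ≥ n + 1 - d b ≥ 2`. Take `a ∈ A` with `d a` minimal. The points `z ∈ a⊥ \ S` lie in `A`, and
the sets `z⊥ ∩ S` are disjoint (two of them meet only at `a ∉ S`), so
`(n + 1 - d a) * d a ≤ #S`. Both factors are at least `2`, so their product is at least their
sum `n + 1 > #S`.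
-/

open Finset Configuration Configuration.ProjectivePlane Projectivization
open scoped LinearAlgebra.Projectivization

theorem SimpleGraph.connected_induce_of_forall_closed {V : Type*} {G : SimpleGraph V}
    {T : Set V} (hT : T.Nonempty)
    (h : ∀ A ⊆ T, A.Nonempty → (∀ a ∈ A, ∀ c ∈ T, G.Adj a c → c ∈ A) → T ⊆ A) :
    (G.induce T).Connected := by
  rw [SimpleGraph.connected_iff]
  refine ⟨fun u v => ?_, hT.to_subtype⟩
  let A : Set V := {x | ∃ hx : x ∈ T, (G.induce T).Reachable u ⟨x, hx⟩}
  have hclosed : ∀ a ∈ A, ∀ c ∈ T, G.Adj a c → c ∈ A := fun a ⟨ha, hua⟩ c hc hac =>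
    ⟨hc, hua.trans (SimpleGraph.Adj.reachable (by simpa using hac))⟩
  obtain ⟨_, huv⟩ := h A (fun x hx => hx.1) ⟨u, u.2, .rfl⟩ hclosed v.2
  exact huv

namespace Configuration.ProjectivePlane

open scoped Classical

variable {P : Type*} [Membership P P]

def IsPolarClosed (S : Finset P) (A : Set P) : Prop :=
  ∀ a ∈ A, ∀ c ∉ S, c ∈ a → c ∈ A

theorem IsPolarClosed.mem_of_mem_of_mem {S : Finset P} {A : Set P} {a b : P}
    (hA : IsPolarClosed S A) (hsymm : ∀ p q : P, p ∈ q → q ∈ p) (ha : a ∈ A) (hb : b ∉ S)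
    (hbA : b ∉ A) {p : P} (hpa : p ∈ a) (hpb : p ∈ b) : p ∈ S := by
  by_contra hp
  exact hbA (hA p (hA a ha p hp hpa) b hb (hsymm _ _ hpb))

variable [Fintype P]

noncomputable def polar (x : P) : Finset P := {p | p ∈ x}

@[simp] theorem mem_polar {x p : P} : p ∈ polar x ↔ p ∈ x := by
  simp [polar]

variable [ProjectivePlane P P]

theorem card_polar (x : P) : #(polar x) = order P P + 1 := by
  rw [← pointCount_eq P x, pointCount, Nat.card_eq_fintype_card, Fintype.card_subtype]
  rfl

theorem sum_card_polar_inter_le (hsymm : ∀ p q : P, p ∈ q → q ∈ p) {S : Finset P} {a : P}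
    (ha : a ∉ S) : ∑ z ∈ polar a, #(polar z ∩ S) ≤ #S := by
  rw [← card_biUnion]
  · exact card_le_card (biUnion_subset.mpr fun _ _ => inter_subset_right)
  intro z hz z' hz' hzz'
  refine disjoint_left.mpr fun p hp hp' => ?_
  simp only [mem_coe, mem_inter, mem_polar] at hz hz' hp hp'
  obtain rfl | rfl := Nondegenerate.eq_or_eq hp.1 (hsymm _ _ hz) hp'.1 (hsymm _ _ hz')
  · exact ha hp.2
  · exact hzz' rfl

namespace IsPolarClosed

variable {S : Finset P} {A : Set P} {a b : P}

theorem card_polar_sdiff_le (hA : IsPolarClosed S A) (hsymm : ∀ p q : P, p ∈ q → q ∈ p)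
    (ha : a ∈ A) (hb : b ∉ S) (hbA : b ∉ A) : #(polar b \ S) ≤ #(polar a ∩ S) := by
  refine card_le_card_of_forall_subsingleton (fun w p => p ∈ w) (fun w hw => ?_) ?_
  · simp only [mem_sdiff, mem_polar] at hw
    have hwA : w ∉ A := fun hwA => hbA (hA w hwA b hb (hsymm _ _ hw.1))
    have haw : a ≠ w := by rintro rfl; exact hwA ha
    obtain ⟨p, ⟨hpa, hpw⟩, -⟩ := HasPoints.existsUnique_point P P a w haw
    exact ⟨p, mem_inter.mpr ⟨mem_polar.mpr hpa, hA.mem_of_mem_of_mem hsymm ha hw.2 hwA hpa hpw⟩,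
      hpw⟩
  · intro p hp w hw w' hw'
    simp only [Set.mem_ofPred_eq, mem_sdiff, mem_polar, mem_inter] at hp hw hw'
    obtain rfl | rfl := Nondegenerate.eq_or_eq hw.2 (hsymm _ _ hw.1.1) hw'.2 (hsymm _ _ hw'.1.1)
    · exact absurd hp.2 hb
    · rfl

theorem order_le_card (hA : IsPolarClosed S A) (hsymm : ∀ p q : P, p ∈ q → q ∈ p)
    (hAS : ∀ a ∈ A, a ∉ S) (hAne : A.Nonempty) (hb : b ∉ S) (hbA : b ∉ A) :
    order P P ≤ #S := by
  obtain ⟨a, ha, hmin⟩ := A.exists_min_image (fun x => #(polar x ∩ S)) A.toFinite hAne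
  have hsplit (x : P) : #(polar x \ S) + #(polar x ∩ S) = order P P + 1 := by
    rw [card_sdiff_add_card_inter, card_polar]
  have hpencil : #(polar a \ S) * #(polar a ∩ S) ≤ #S := calc
    #(polar a \ S) * #(polar a ∩ S) = ∑ _z ∈ polar a \ S, #(polar a ∩ S) := by
      rw [sum_const, smul_eq_mul]
    _ ≤ ∑ z ∈ polar a \ S, #(polar z ∩ S) := sum_le_sum fun z hz => by
      simp only [mem_sdiff, mem_polar] at hz
      exact hmin z (hA a ha z hz.2 hz.1)
    _ ≤ ∑ z ∈ polar a, #(polar z ∩ S) := sum_le_sum_of_subset sdiff_subset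
    _ ≤ #S := sum_card_polar_inter_le hsymm (hAS a ha)
  have hb_le := hA.card_polar_sdiff_le hsymm ha hb hbA
  have hSa : #(polar a ∩ S) ≤ #S := card_le_card inter_subset_right
  have hSb : #(polar b ∩ S) ≤ #S := card_le_card inter_subset_right
  have ha_split := hsplit a
  have hb_split := hsplit b
  by_contra! hS
  have hout : 2 ≤ #(polar a \ S) := by omega
  have hin : 2 ≤ #(polar a ∩ S) := by omega
  have : #(polar a \ S) + #(polar a ∩ S) ≤ #(polar a \ S) * #(polar a ∩ S) := by nlinarith
  omega

end IsPolarClosed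

theorem connected_induce_compl_fromRel (hsymm : ∀ p q : P, p ∈ q → q ∈ p) (S : Set P)
    (hS : S.ncard < order P P) :
    ((SimpleGraph.fromRel fun p q : P => p ∈ q).induce Sᶜ).Connected := by
  apply SimpleGraph.connected_induce_of_forall_closed
  · rw [Set.nonempty_compl]
    rintro rfl
    rw [Set.ncard_univ, Nat.card_eq_fintype_card, card_points P P] at hS
    nlinarith
  · intro A hAT hAne hAcl b hb
    by_contra hbA
    have hclosed : IsPolarClosed S.toFinset A := fun a ha c hc hca => by
      obtain rfl | hac := eq_or_ne a c
      · exact ha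
      · exact hAcl a ha c (by simpa using hc)
          ((SimpleGraph.fromRel_adj _ _ _).mpr ⟨hac, .inr hca⟩)
    have := hclosed.order_le_card hsymm (fun a ha => by simpa using hAT ha) hAne
      (by simpa using hb) hbA
    rw [Set.ncard_eq_toFinset_card'] at hS
    omega

end Configuration.ProjectivePlane

theorem Configuration.ofField.order_eq_card (K : Type*) [Field K] [Fintype K] [DecidableEq K] :
    order (ℙ K (Fin 3 → K)) (ℙ K (Fin 3 → K)) = Fintype.card K := by
  let _ := Fintype.ofFinite (ℙ K (Fin 3 → K))
  have hpoints := card_points (ℙ K (Fin 3 → K)) (ℙ K (Fin 3 → K))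
  rw [← Nat.card_eq_fintype_card,
    card_of_finrank K (Fin 3 → K) (Module.finrank_fin_fun K)] at hpoints
  simp only [sum_range_succ, range_zero, sum_empty, Nat.card_eq_fintype_card] at hpoints
  refine le_antisymm ?_ ?_ <;> nlinarith

theorem brown_eq_fromRel (F : Type*) [Field F] :
    brown F = SimpleGraph.fromRel fun p q => p ∈ q := by
  ext x y
  have horth : x.orthogonal y ↔ x.rep ⬝ᵥ y.rep = 0 := by
    rw [← orthogonal_mk x.rep_nonzero y.rep_nonzero, mk_rep, mk_rep]
  rw [SimpleGraph.fromRel_adj, ofField.mem_iff, ofField.mem_iff, orthogonal_comm (v := y), or_self,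
    horth]
  rfl

theorem brown_vertex_connectivity_general (F : Type*) [Field F] [Fintype F] :
    Fintype.card F < Nat.card (Projectivization F (Fin 3 → F)) ∧
    ∀ S : Set (Projectivization F (Fin 3 → F)), S.ncard < Fintype.card F →
      ((brown F).induce Sᶜ).Connected := by
  classical
  let _ := Fintype.ofFinite (ℙ F (Fin 3 → F))
  have hsymm : ∀ p q : ℙ F (Fin 3 → F), p ∈ q → q ∈ p := fun _ _ => orthogonal_comm.mp
  rw [← ofField.order_eq_card F, brown_eq_fromRel, Nat.card_eq_fintype_card,
    card_points (ℙ F (Fin 3 → F)) (ℙ F (Fin 3 → F))]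
  exact ⟨by nlinarith, fun S hS => connected_induce_compl_fromRel hsymm S hS⟩

theorem brown_vertex_connectivity (F : Type*) [Field F] [Fintype F]
    (hodd : Odd (Fintype.card F)) :
    Fintype.card F < Nat.card (Projectivization F (Fin 3 → F)) ∧
    ∀ S : Set (Projectivization F (Fin 3 → F)), S.ncard < Fintype.card F →
      ((brown F).induce Sᶜ).Connected :=
  brown_vertex_connectivity_general F
end
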